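/- arXiv:0905.3701 — 6 statements merged into one kernel-verified Lean document; each statement's English description precedes it below -/
import Mathlib

section
/- Let μ, σ : J → ℝ satisfy the Engelbert–Schmidt conditions. Then v(r) < ∞ if and only if both s(r) < ∞ and the function x ↦ (s(r) − s(x))/(ρ(x)σ²(x)) belongs to L¹_loc(r−). (Equivalence of the two forms of Feller's test for explosion at the right endpoint r.) -/
open MeasureTheory Set Filter

/-!
Write `w = ρ σ²`, so that `v x = ∫_c^x (s x - s y) / w y dy`. For `c ≤ x ≤ x'` in `J` and any
constant `K`, shifting the numerator from `s x' - s y` to `K - s y` gives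
`∫_c^x (K - s y) / w y dy ≤ v x' + (K - s x') ∫_c^x 1 / w`.
With `K = s x₁` for a fixed `x₁ > c` this bounds `s` by `sup v`; with `K = sup s` and `x' ↑ r` it
bounds `∫_c^x (sup s - s) / w` by `sup v` uniformly in `x`, which is integrability near `r`.
Conversely `v x ≤ ∫_c^x (sup s - s) / w ≤ ∫_(c,r) (sup s - s) / w`.
-/

theorem MeasureTheory.IntegrableOn.iUnion_of_directed {α E ι : Type*} [MeasurableSpace α]
    [NormedAddCommGroup E] [Countable ι] {μ : Measure α} {f : α → E} {t : ι → Set α} {V : ℝ}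
    (hd : Directed (· ⊆ ·) t) (hf : ∀ i, IntegrableOn f (t i) μ)
    (hV : ∀ i, ∫ x in t i, ‖f x‖ ∂μ ≤ V) : IntegrableOn f (⋃ i, t i) μ := by
  refine ⟨aestronglyMeasurable_iUnion_iff.2 fun i => (hf i).1, ?_⟩
  rw [HasFiniteIntegral, setLIntegral_iUnion_of_directed _ hd]
  refine lt_of_le_of_lt (iSup_le fun i => ?_) (ENNReal.ofReal_lt_top (r := V))
  rw [← ofReal_integral_norm_eq_lintegral_enorm (hf i)]
  exact ENNReal.ofReal_le_ofReal (hV i)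

theorem IsOpen.inter_Ioi_subset_iUnion_Ioc_rat {J : Set ℝ} (hJ : IsOpen J) (c : ℝ) :
    J ∩ Ioi c ⊆ ⋃ q : {q : ℚ // (q : ℝ) ∈ J}, Ioc c (q : ℝ) := by
  rintro y ⟨hyJ, hcy⟩
  obtain ⟨u, hyu, hu⟩ := exists_Ico_subset_of_mem_nhds (hJ.mem_nhds hyJ) ⟨y + 1, lt_add_one y⟩
  obtain ⟨q, hyq, hqu⟩ := exists_rat_btwn hyu
  exact mem_iUnion.2 ⟨⟨q, hu ⟨hyq.le, hqu⟩⟩, hcy, hyq.le⟩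

theorem IsOpen.integrableOn_inter_Ioi {E : Type*} [NormedAddCommGroup E] {J : Set ℝ}
    (hJ : IsOpen J) {c V : ℝ} {f : ℝ → E} (hf : ∀ x ∈ J, IntegrableOn f (Ioc c x))
    (hV : ∀ x ∈ J, ∫ y in Ioc c x, ‖f y‖ ≤ V) : IntegrableOn f (J ∩ Ioi c) := by
  have hmono : Monotone fun q : {q : ℚ // (q : ℝ) ∈ J} => Ioc c (q : ℝ) :=
    fun _ _ h => Ioc_subset_Ioc_right (Rat.cast_le.2 h)
  exact (IntegrableOn.iUnion_of_directed hmono.directed_le (fun q => hf q q.2)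
    (fun q => hV q q.2)).mono_set (hJ.inter_Ioi_subset_iUnion_Ioc_rat c)

theorem IsOpen.continuousOn_primitive {J : Set ℝ} (hJ : IsOpen J) {c : ℝ} (hc : c ∈ J)
    {f : ℝ → ℝ} (hf : ∀ a ∈ J, ∀ b ∈ J, IntervalIntegrable f volume a b) :
    ContinuousOn (fun x => ∫ y in c..x, f y) J := by
  intro x hx
  obtain ⟨a, b, hxab, hab, habJ⟩ := exists_Icc_mem_subset_of_mem_nhds (hJ.mem_nhds hx)
  have hleft : min a c ∈ J := min_rec' (· ∈ J) (habJ (left_mem_Icc.2 (hxab.1.trans hxab.2))) hc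
  have hright : max b c ∈ J := max_rec' (· ∈ J) (habJ (right_mem_Icc.2 (hxab.1.trans hxab.2))) hc
  have hsub : Icc a b ⊆ uIcc (min a c) (max b c) := by
    rw [uIcc_of_le ((min_le_right a c).trans (le_max_right b c))]
    exact Icc_subset_Icc (min_le_left a c) (le_max_left b c)
  refine ((intervalIntegral.continuousOn_primitive_interval' (hf _ hleft _ hright) ?_).continuousAt
    (mem_of_superset hab hsub)).continuousWithinAt
  rw [uIcc_of_le ((min_le_right a c).trans (le_max_right b c))]
  exact ⟨min_le_right a c, le_max_right b c⟩

theorem monotoneOn_primitive_of_nonneg {J : Set ℝ} (hJc : J.OrdConnected) {c : ℝ} (hc : c ∈ J)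
    {f : ℝ → ℝ} (hf : ∀ a ∈ J, ∀ b ∈ J, IntervalIntegrable f volume a b)
    (hf0 : ∀ x ∈ J, 0 ≤ f x) :
    MonotoneOn (fun x => ∫ y in c..x, f y) J := by
  intro a ha b hb hab
  rw [← sub_nonneg, intervalIntegral.integral_interval_sub_left (hf c hc b hb) (hf c hc a ha)]
  exact intervalIntegral.integral_nonneg hab fun y hy => hf0 y (hJc.out ha hb hy)

theorem nonpos_of_forall_le_csSup_sub_mul {S : Set ℝ} (hne : S.Nonempty) {d G : ℝ} (hG : 0 ≤ G)
    (hd : ∀ t ∈ S, d ≤ (sSup S - t) * G) : d ≤ 0 := by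
  obtain ⟨t₀, ht₀⟩ := hne
  rcases hG.eq_or_lt with rfl | hG
  · simpa using hd t₀ ht₀
  by_contra! hpos
  have hbound : ∀ t ∈ S, t ≤ sSup S - d / G := fun t ht => by
    have := (div_le_iff₀ hG).2 (hd t ht)
    linarith
  have := csSup_le ⟨t₀, ht₀⟩ hbound
  linarith [div_pos hpos hG]

section FellerIntegral

variable {J : Set ℝ} {c : ℝ} {s w : ℝ → ℝ}

theorem integrableOn_sub_div (hJc : J.OrdConnected) (hsc : ContinuousOn s J)
    (hwi : ∀ a ∈ J, ∀ b ∈ J, IntegrableOn (fun y => (w y)⁻¹) (uIcc a b)) {a b : ℝ}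
    (ha : a ∈ J) (hb : b ∈ J) (K : ℝ) :
    IntegrableOn (fun y => (K - s y) / w y) (uIcc a b) := by
  have hK : ContinuousOn (fun y => K - s y) (uIcc a b) :=
    continuousOn_const.sub (hsc.mono (hJc.uIcc_subset ha hb))
  simpa only [div_eq_mul_inv] using (hwi a ha b hb).continuousOn_mul hK isCompact_uIcc

theorem integral_sub_div_eq (hJc : J.OrdConnected) (hsc : ContinuousOn s J)
    (hwi : ∀ a ∈ J, ∀ b ∈ J, IntegrableOn (fun y => (w y)⁻¹) (uIcc a b)) (hc : c ∈ J)
    {x : ℝ} (hx : x ∈ J) (K K' : ℝ) :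
    ∫ y in c..x, (K - s y) / w y =
      (∫ y in c..x, (K' - s y) / w y) + (K - K') * ∫ y in c..x, (w y)⁻¹ := by
  rw [← intervalIntegral.integral_const_mul, ← intervalIntegral.integral_add
    (integrableOn_sub_div hJc hsc hwi hc hx K').intervalIntegrable
    ((hwi c hc x hx).intervalIntegrable.const_mul (K - K'))]
  congr 1 with y
  ring

theorem integral_sub_div_le (hJc : J.OrdConnected) (hs : MonotoneOn s J)
    (hsc : ContinuousOn s J) (hw : ∀ y ∈ J, 0 < w y)
    (hwi : ∀ a ∈ J, ∀ b ∈ J, IntegrableOn (fun y => (w y)⁻¹) (uIcc a b)) (hc : c ∈ J)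
    {x x' : ℝ} (hcx : c ≤ x) (hxx' : x ≤ x') (hx' : x' ∈ J) (K : ℝ) :
    ∫ y in c..x, (K - s y) / w y ≤
      (∫ y in c..x', (s x' - s y) / w y) + (K - s x') * ∫ y in c..x, (w y)⁻¹ := by
  have hx : x ∈ J := hJc.out hc hx' ⟨hcx, hxx'⟩
  rw [integral_sub_div_eq hJc hsc hwi hc hx K (s x')]
  refine add_le_add_left (intervalIntegral.integral_mono_interval le_rfl hcx hxx' ?_
    (integrableOn_sub_div hJc hsc hwi hc hx' _).intervalIntegrable) _
  refine (ae_restrict_iff' measurableSet_Ioc).2 (Eventually.of_forall fun y hy => ?_)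
  have hyJ : y ∈ J := hJc.out hc hx' (Ioc_subset_Icc_self hy)
  exact div_nonneg (sub_nonneg.2 (hs hyJ hx' hy.2)) (hw y hyJ).le

theorem bddAbove_image_of_bddAbove_integral_sub_div (hJ : IsOpen J) (hJc : J.OrdConnected)
    (hc : c ∈ J) (hs : MonotoneOn s J) (hsc : ContinuousOn s J) (hw : ∀ y ∈ J, 0 < w y)
    (hwi : ∀ a ∈ J, ∀ b ∈ J, IntegrableOn (fun y => (w y)⁻¹) (uIcc a b))
    (hF : BddAbove ((fun x => ∫ y in c..x, (s x - s y) / w y) '' (J ∩ Ici c))) :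
    BddAbove (s '' J) := by
  obtain ⟨V, hV⟩ := hF
  obtain ⟨u, hcu, hu⟩ := exists_Ico_subset_of_mem_nhds (hJ.mem_nhds hc) ⟨c + 1, lt_add_one c⟩
  obtain ⟨x₁, hcx₁, hx₁u⟩ := exists_between hcu
  have hx₁ : x₁ ∈ J := hu ⟨hcx₁.le, hx₁u⟩
  set G := ∫ y in c..x₁, (w y)⁻¹
  have hG : 0 < G := intervalIntegral.intervalIntegral_pos_of_pos_on
    (hwi c hc x₁ hx₁).intervalIntegrable
    (fun y hy => inv_pos.2 (hw y (hJc.out hc hx₁ (Ioo_subset_Icc_self hy)))) hcx₁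
  refine ⟨max (s x₁) (s x₁ + V / G), ?_⟩
  rintro _ ⟨x, hx, rfl⟩
  rcases le_total x x₁ with hxx₁ | hx₁x
  · exact le_max_of_le_left (hs hx hx₁ hxx₁)
  have hle := integral_sub_div_le hJc hs hsc hw hwi hc hcx₁.le hx₁x hx (s x₁)
  have hnonneg : 0 ≤ ∫ y in c..x₁, (s x₁ - s y) / w y :=
    intervalIntegral.integral_nonneg hcx₁.le fun y hy =>
      have hyJ : y ∈ J := hJc.out hc hx₁ hy
      div_nonneg (sub_nonneg.2 (hs hyJ hx₁ hy.2)) (hw y hyJ).le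
  have hFx : ∫ y in c..x, (s x - s y) / w y ≤ V := hV ⟨x, ⟨hx, hcx₁.le.trans hx₁x⟩, rfl⟩
  have : s x - s x₁ ≤ V / G := (le_div_iff₀ hG).2 (by linarith)
  exact le_max_of_le_right (by linarith)

theorem integrableOn_sSup_sub_div_of_bddAbove (hJ : IsOpen J) (hJc : J.OrdConnected)
    (hc : c ∈ J) (hs : MonotoneOn s J) (hsc : ContinuousOn s J) (hw : ∀ y ∈ J, 0 < w y)
    (hwi : ∀ a ∈ J, ∀ b ∈ J, IntegrableOn (fun y => (w y)⁻¹) (uIcc a b))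
    (hF : BddAbove ((fun x => ∫ y in c..x, (s x - s y) / w y) '' (J ∩ Ici c)))
    (hsb : BddAbove (s '' J)) :
    IntegrableOn (fun y => (sSup (s '' J) - s y) / w y) (J ∩ Ioi c) := by
  set M := sSup (s '' J)
  have hsM : ∀ y ∈ J, s y ≤ M := fun y hy => le_csSup hsb (mem_image_of_mem s hy)
  obtain ⟨V, hV⟩ := hF
  have hFV : ∀ x ∈ J, c ≤ x → ∫ y in c..x, (s x - s y) / w y ≤ V := fun x hx hcx =>
    hV ⟨x, ⟨hx, hcx⟩, rfl⟩
  refine hJ.integrableOn_inter_Ioi (V := V) (fun x hx => ?_) (fun x hx => ?_)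
  · exact (integrableOn_sub_div hJc hsc hwi hc hx M).mono_set
      (Ioc_subset_Icc_self.trans Icc_subset_uIcc)
  rcases lt_or_ge x c with hxc | hcx
  · simpa [Ioc_eq_empty_of_le hxc.le] using hFV c hc le_rfl
  have hnorm : ∫ y in Ioc c x, ‖(M - s y) / w y‖ = ∫ y in c..x, (M - s y) / w y := by
    rw [intervalIntegral.integral_of_le hcx]
    refine setIntegral_congr_fun measurableSet_Ioc fun y hy => ?_
    have hyJ : y ∈ J := hJc.out hc hx (Ioc_subset_Icc_self hy)
    exact Real.norm_of_nonneg (div_nonneg (sub_nonneg.2 (hsM y hyJ)) (hw y hyJ).le)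
  have hG : 0 ≤ ∫ y in c..x, (w y)⁻¹ :=
    intervalIntegral.integral_nonneg hcx fun y hy => (inv_pos.2 (hw y (hJc.out hc hx hy))).le
  rw [hnorm, ← sub_nonpos]
  refine nonpos_of_forall_le_csSup_sub_mul ⟨s c, mem_image_of_mem s hc⟩ hG
    (forall_mem_image.2 fun x' hx' => ?_)
  have hx'' : max x x' ∈ J := max_rec' (· ∈ J) hx hx'
  have hle := integral_sub_div_le hJc hs hsc hw hwi hc hcx (le_max_left x x') hx'' M
  have hFx'' := hFV _ hx'' (hcx.trans (le_max_left x x'))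
  have hmono : (M - s (max x x')) * ∫ y in c..x, (w y)⁻¹ ≤ (M - s x') * ∫ y in c..x, (w y)⁻¹ :=
    mul_le_mul_of_nonneg_right (sub_le_sub_left (hs hx' hx'' (le_max_right x x')) M) hG
  linarith

theorem bddAbove_integral_sub_div_of_integrableOn (hJc : J.OrdConnected) (hc : c ∈ J)
    (hsc : ContinuousOn s J) (hw : ∀ y ∈ J, 0 < w y)
    (hwi : ∀ a ∈ J, ∀ b ∈ J, IntegrableOn (fun y => (w y)⁻¹) (uIcc a b))
    (hsb : BddAbove (s '' J)) {z : ℝ} (hz : z ∈ J)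
    (hint : IntegrableOn (fun y => (sSup (s '' J) - s y) / w y) (J ∩ Ioi z)) :
    BddAbove ((fun x => ∫ y in c..x, (s x - s y) / w y) '' (J ∩ Ici c)) := by
  set M := sSup (s '' J)
  have hsM : ∀ y ∈ J, s y ≤ M := fun y hy => le_csSup hsb (mem_image_of_mem s hy)
  have hint_c : IntegrableOn (fun y => (M - s y) / w y) (J ∩ Ioi c) := by
    refine ((integrableOn_sub_div hJc hsc hwi hc hz M).union hint).mono_set ?_
    rintro y ⟨hyJ, hcy⟩
    rcases le_or_gt y z with hyz | hzy
    exacts [Or.inl (Icc_subset_uIcc ⟨hcy.le, hyz⟩), Or.inr ⟨hyJ, hzy⟩]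
  refine ⟨∫ y in J ∩ Ioi c, (M - s y) / w y, ?_⟩
  rintro _ ⟨x, ⟨hx, hcx⟩, rfl⟩
  have hsub : Ioc c x ⊆ J ∩ Ioi c := fun y hy => ⟨hJc.out hc hx (Ioc_subset_Icc_self hy), hy.1⟩
  have hnonneg : 0 ≤ᵐ[volume.restrict (J ∩ Ioi c)] fun y => (M - s y) / w y :=
    (ae_restrict_iff' (hJc.measurableSet.inter measurableSet_Ioi)).2 (Eventually.of_forall
      fun y hy => div_nonneg (sub_nonneg.2 (hsM y hy.1)) (hw y hy.1).le)
  calc ∫ y in c..x, (s x - s y) / w y ≤ ∫ y in c..x, (M - s y) / w y :=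
        intervalIntegral.integral_mono_on hcx
          (integrableOn_sub_div hJc hsc hwi hc hx _).intervalIntegrable
          (integrableOn_sub_div hJc hsc hwi hc hx M).intervalIntegrable fun y hy =>
            div_le_div_of_nonneg_right (sub_le_sub_right (hsM x hx) _)
              (hw y (hJc.out hc hx hy)).le
    _ = ∫ y in Ioc c x, (M - s y) / w y := intervalIntegral.integral_of_le hcx
    _ ≤ ∫ y in J ∩ Ioi c, (M - s y) / w y := setIntegral_mono_set hint_c hnonneg hsub.eventuallyLE

theorem bddAbove_integral_sub_div_iff (hJ : IsOpen J) (hJc : J.OrdConnected) (hc : c ∈ J)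
    (hs : MonotoneOn s J) (hsc : ContinuousOn s J) (hw : ∀ y ∈ J, 0 < w y)
    (hwi : ∀ a ∈ J, ∀ b ∈ J, IntegrableOn (fun y => (w y)⁻¹) (uIcc a b)) :
    BddAbove ((fun x => ∫ y in c..x, (s x - s y) / w y) '' (J ∩ Ici c)) ↔
      BddAbove (s '' J) ∧
        ∃ z ∈ J, IntegrableOn (fun y => (sSup (s '' J) - s y) / w y) (J ∩ Ioi z) := by
  refine ⟨fun hF => ?_, fun ⟨hsb, z, hz, hint⟩ =>
    bddAbove_integral_sub_div_of_integrableOn hJc hc hsc hw hwi hsb hz hint⟩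
  have hsb := bddAbove_image_of_bddAbove_integral_sub_div hJ hJc hc hs hsc hw hwi hF
  exact ⟨hsb, c, hc, integrableOn_sSup_sub_div_of_bddAbove hJ hJc hc hs hsc hw hwi hF hsb⟩

end FellerIntegral

theorem EReal.isOpen_preimage_coe_Ioo (l r : EReal) :
    IsOpen (((↑) : ℝ → EReal) ⁻¹' Ioo l r) :=
  isOpen_Ioo.preimage continuous_coe_real_ereal

theorem EReal.ordConnected_preimage_coe_Ioo (l r : EReal) :
    (((↑) : ℝ → EReal) ⁻¹' Ioo l r).OrdConnected :=
  ⟨fun _ hx _ hy _ hz =>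
    ⟨hx.1.trans_le (EReal.coe_le_coe hz.1), (EReal.coe_le_coe hz.2).trans_lt hy.2⟩⟩

theorem feller_test_right_endpoint_general
    (l r : EReal)
    (J : Set ℝ) (hJdef : J = {x : ℝ | l < (x : EReal) ∧ (x : EReal) < r})
    (μ σ : ℝ → ℝ)
    (hσ0 : ∀ x ∈ J, σ x ≠ 0)
    (hloc1 : ∀ K : Set ℝ, K ⊆ J → IsCompact K →
      IntegrableOn (fun x => 1 / σ x ^ 2) K volume)
    (hloc2 : ∀ K : Set ℝ, K ⊆ J → IsCompact K →
      IntegrableOn (fun x => μ x / σ x ^ 2) K volume)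
    (c : ℝ) (hc : c ∈ J)
    (ρ s v : ℝ → ℝ)
    (hρ : ∀ x ∈ J, ρ x = Real.exp (-(∫ y in c..x, 2 * μ y / σ y ^ 2)))
    (hs : ∀ x ∈ J, s x = ∫ y in c..x, ρ y)
    (hv : ∀ x ∈ J, v x = ∫ y in c..x, (s x - s y) / (ρ y * σ y ^ 2)) :
    BddAbove (v '' (J ∩ Ici c)) ↔
      (BddAbove (s '' J) ∧
        ∃ z ∈ J, IntegrableOn
          (fun x => (sSup (s '' J) - s x) / (ρ x * σ x ^ 2)) (J ∩ Ioi z) volume) := by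
  replace hJdef : J = ((↑) : ℝ → EReal) ⁻¹' Ioo l r := hJdef
  have hJ : IsOpen J := hJdef ▸ EReal.isOpen_preimage_coe_Ioo l r
  have hJc : J.OrdConnected := hJdef ▸ EReal.ordConnected_preimage_coe_Ioo l r
  have hdrift : ∀ a ∈ J, ∀ b ∈ J, IntervalIntegrable (fun y => 2 * μ y / σ y ^ 2) volume a b :=
    fun a ha b hb => by
      simpa only [mul_div_assoc] using IntegrableOn.intervalIntegrable
        ((hloc2 _ (hJc.uIcc_subset ha hb) isCompact_uIcc).const_mul 2)
  have hρc : ContinuousOn ρ J :=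
    (Real.continuous_exp.comp_continuousOn (hJ.continuousOn_primitive hc hdrift).neg).congr hρ
  have hρpos : ∀ x ∈ J, 0 < ρ x := fun x hx => hρ x hx ▸ Real.exp_pos _
  have hρi : ∀ a ∈ J, ∀ b ∈ J, IntervalIntegrable ρ volume a b := fun a ha b hb =>
    (hρc.mono (hJc.uIcc_subset ha hb)).intervalIntegrable
  have hsc : ContinuousOn s J := (hJ.continuousOn_primitive hc hρi).congr hs
  have hsm : MonotoneOn s J := fun a ha b hb hab => by
    simpa only [hs a ha, hs b hb] using
      monotoneOn_primitive_of_nonneg hJc hc hρi (fun x hx => (hρpos x hx).le) ha hb hab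
  have hw : ∀ y ∈ J, 0 < ρ y * σ y ^ 2 := fun y hy =>
    mul_pos (hρpos y hy) (pow_two_pos_of_ne_zero (hσ0 y hy))
  have hwi : ∀ a ∈ J, ∀ b ∈ J, IntegrableOn (fun y => (ρ y * σ y ^ 2)⁻¹) (uIcc a b) := by
    intro a ha b hb
    have hρinv : ContinuousOn (fun y => (ρ y)⁻¹) (uIcc a b) :=
      (hρc.mono (hJc.uIcc_subset ha hb)).inv₀ fun y hy =>
        (hρpos y (hJc.uIcc_subset ha hb hy)).ne'
    simpa only [mul_inv, one_div] using
      (hloc1 _ (hJc.uIcc_subset ha hb) isCompact_uIcc).continuousOn_mul hρinv isCompact_uIcc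
  rw [image_congr fun x hx => hv x hx.1]
  exact bddAbove_integral_sub_div_iff hJ hJc hc hsm hsc hw hwi

/-- **Feller's test for explosion at the right endpoint `r`: equivalence of the two forms.**
Let `J = (l, r)` (with `-∞ ≤ l < r ≤ ∞`, modelled by `l r : EReal`), fix `c ∈ J`, and let
`μ, σ : J → ℝ` be Borel functions satisfying the Engelbert–Schmidt conditions: `σ ≠ 0` on `J`
and `1/σ²`, `μ/σ²` are integrable on every compact subset of `J`.  With
`ρ(x) = exp(-∫_c^x 2μ/σ²)`, `s(x) = ∫_c^x ρ` and `v(x) = ∫_c^x (s(x) - s(y))/(ρ(y) σ(y)²) dy`,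
the monotone limit `v(r) = lim_{x ↑ r} v(x)` is finite (i.e. `v` is bounded above on `J ∩ [c, ∞)`)
if and only if `s(r) = lim_{x ↑ r} s(x)` is finite (i.e. `s` is bounded above on `J`, and then
`s(r) = sSup (s '' J)`) and the function `x ↦ (s(r) - s(x))/(ρ(x) σ(x)²)` belongs to
`L¹_loc(r-)`, i.e. is integrable on `J ∩ (z, ∞)` (that is, on `(z, r)`) for some `z ∈ J`. -/
theorem feller_test_right_endpoint
    (l r : EReal) (hlr : l < r)
    (J : Set ℝ) (hJdef : J = {x : ℝ | l < (x : EReal) ∧ (x : EReal) < r})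
    (μ σ : ℝ → ℝ) (hμm : Measurable μ) (hσm : Measurable σ)
    (hσ0 : ∀ x ∈ J, σ x ≠ 0)
    (hloc1 : ∀ K : Set ℝ, K ⊆ J → IsCompact K →
      IntegrableOn (fun x => 1 / σ x ^ 2) K volume)
    (hloc2 : ∀ K : Set ℝ, K ⊆ J → IsCompact K →
      IntegrableOn (fun x => μ x / σ x ^ 2) K volume)
    (c : ℝ) (hc : c ∈ J)
    (ρ s v : ℝ → ℝ)
    (hρ : ∀ x ∈ J, ρ x = Real.exp (-(∫ y in c..x, 2 * μ y / σ y ^ 2)))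
    (hs : ∀ x ∈ J, s x = ∫ y in c..x, ρ y)
    (hv : ∀ x ∈ J, v x = ∫ y in c..x, (s x - s y) / (ρ y * σ y ^ 2)) :
    BddAbove (v '' (J ∩ Ici c)) ↔
      (BddAbove (s '' J) ∧
        ∃ z ∈ J, IntegrableOn
          (fun x => (sSup (s '' J) - s x) / (ρ x * σ x ^ 2)) (J ∩ Ioi z) volume) :=
  feller_test_right_endpoint_general l r J hJdef μ σ hσ0 hloc1 hloc2 c hc ρ s v hρ hs hv
end

section
/- Let μ, σ, b : J → ℝ be as in the context. Then the following two conditions are equivalent: (i) s(r) < ∞ and (s(r) − s)·b²/(ρσ²) ∈ L¹_loc(r−); (ii) s̃(r) < ∞ and (s̃(r) − s̃)·b²/(ρ̃σ²) ∈ L¹_loc(r−). (Equivalence of the two characterizations of the right endpoint r being a good endpoint.) -/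
/-!
Write `δ = s(r) - s`, so that `δ' = -ρ`, and `g = δ b² / (ρ σ²)`; condition (i) says that
`∫_z^r g < ∞`. By AM-GM, `|2b/σ| ≤ 2g + ρ/(2δ) = 2g - (log δ)'/2`, so comparing
`ρ̃/ρ = exp(-∫_c 2b/σ)` at `x` and at `u ≥ x` gives
`ρ̃(u) ≤ e^{2∫_x^r g} (ρ̃(x)/ρ(x)) √δ(x) · ρ(u)/√δ(u)`. As `ρ/√δ = (-2√δ)'`, integrating over
`u ≥ x` yields `s̃(r) - s̃(x) ≤ 2 e^{2∫_x^r g} (ρ̃(x)/ρ(x)) δ(x)`: hence `s̃(r) < ∞`, and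
`(s̃(r) - s̃) b²/(ρ̃σ²) ≤ 2 e^{2∫_z^r g} g`, which is (ii). Replacing `b` by `-b` exchanges `ρ` and
`ρ̃`, so the same argument gives the converse.
-/

open MeasureTheory Set Filter

open Real intervalIntegral Topology

theorem integrableOn_of_integrableOn_sq {α : Type*} [MeasurableSpace α] {μ : Measure α}
    {g : α → ℝ} {K : Set α} (hK : μ K ≠ ⊤) (hg : AEStronglyMeasurable g (μ.restrict K))
    (hg2 : IntegrableOn (fun x => g x ^ 2) K μ) : IntegrableOn g K μ :=
  have := isFiniteMeasure_restrict.2 hK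
  ((memLp_two_iff_integrable_sq hg).2 hg2).integrable one_le_two

theorem continuousOn_primitive_of_isOpen {J : Set ℝ} (hJo : IsOpen J) {f : ℝ → ℝ} {c : ℝ}
    (hc : c ∈ J) (hf : ∀ x ∈ J, ∀ y ∈ J, IntervalIntegrable f volume x y) :
    ContinuousOn (fun x => ∫ t in c..x, f t) J := by
  intro x hx
  obtain ⟨p, q, hxpq, hnhds, hpqJ⟩ := exists_Icc_mem_subset_of_mem_nhds (hJo.mem_nhds hx)
  have hp : p ∈ J := hpqJ (left_mem_Icc.2 (hxpq.1.trans hxpq.2))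
  have hq : q ∈ J := hpqJ (right_mem_Icc.2 (hxpq.1.trans hxpq.2))
  have hcont : ContinuousOn (fun y => (∫ t in c..p, f t) + ∫ t in p..y, f t) (Icc p q) :=
    continuousOn_const.add
      ((continuousOn_primitive_interval' (hf p hp q hq) left_mem_uIcc).mono Icc_subset_uIcc)
  refine ((hcont.congr fun y hy => ?_).continuousAt hnhds).continuousWithinAt
  exact (integral_add_adjacent_intervals (hf c hc p hp) (hf p hp y (hpqJ hy))).symm

theorem integral_div_eq_log_sub {ρ δ : ℝ → ℝ} {x y : ℝ} (hxy : x ≤ y)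
    (hδ : ∀ t ∈ Icc x y, HasDerivAt δ (-ρ t) t) (hδ0 : ∀ t ∈ Icc x y, 0 < δ t)
    (hρ : ContinuousOn ρ (Icc x y)) :
    ∫ t in x..y, ρ t / δ t = log (δ x) - log (δ y) := by
  rw [← uIcc_of_le hxy] at hδ hδ0 hρ
  have hderiv : ∀ t ∈ uIcc x y, HasDerivAt (fun t => -log (δ t)) (ρ t / δ t) t := fun t ht => by
    have h := ((hδ t ht).log (hδ0 t ht).ne').neg
    rwa [neg_div, neg_neg] at h
  rw [integral_eq_sub_of_hasDerivAt hderiv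
    (hρ.div (HasDerivAt.continuousOn hδ) fun t ht => (hδ0 t ht).ne').intervalIntegrable]
  ring

theorem integral_div_sqrt_le {ρ δ : ℝ → ℝ} {x y : ℝ} (hxy : x ≤ y)
    (hδ : ∀ t ∈ Icc x y, HasDerivAt δ (-ρ t) t) (hδ0 : ∀ t ∈ Icc x y, 0 < δ t)
    (hρ : ContinuousOn ρ (Icc x y)) :
    ∫ t in x..y, ρ t / √(δ t) ≤ 2 * √(δ x) := by
  rw [← uIcc_of_le hxy] at hδ hδ0 hρ
  have hderiv : ∀ t ∈ uIcc x y, HasDerivAt (fun t => -(2 * √(δ t))) (ρ t / √(δ t)) t :=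
    fun t ht => by
      have h := (((hδ t ht).sqrt (hδ0 t ht).ne').const_mul 2).neg
      rwa [show -(2 * (-ρ t / (2 * √(δ t)))) = ρ t / √(δ t) by ring] at h
  have hcont : ContinuousOn (fun t => ρ t / √(δ t)) (uIcc x y) :=
    hρ.div (HasDerivAt.continuousOn hδ).sqrt fun t ht => (sqrt_pos.2 (hδ0 t ht)).ne'
  rw [integral_eq_sub_of_hasDerivAt hderiv hcont.intervalIntegrable]
  linarith [sqrt_nonneg (δ y)]

theorem neg_le_two_mul_add_div {f q d r : ℝ} (hd : 0 < d) (hr : 0 < r) (hfq : f ^ 2 ≤ 4 * q) :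
    -f ≤ 2 * (d * q / r) + r / d / 2 := by
  have h : 2 * (d * q / r) + r / d / 2 = (4 * d ^ 2 * q + r ^ 2) / (2 * d * r) := by
    field_simp
    ring
  rw [h, le_div_iff₀ (by positivity)]
  nlinarith [sq_nonneg (d * f + r), mul_le_mul_of_nonneg_left hfq (sq_nonneg d)]

theorem sqrt_eq_exp_log_div_two {a : ℝ} (ha : 0 < a) : √a = exp (log a / 2) := by
  rw [sqrt_eq_rpow, rpow_def_of_pos ha]
  ring_nf

theorem exp_neg_integral_mul_sqrt_le {f g ρ δ : ℝ → ℝ} {x u : ℝ} (hxu : x ≤ u)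
    (hf : IntervalIntegrable f volume x u) (hg : IntervalIntegrable g volume x u)
    (hδ : ∀ t ∈ Icc x u, HasDerivAt δ (-ρ t) t) (hδ0 : ∀ t ∈ Icc x u, 0 < δ t)
    (hρ : ContinuousOn ρ (Icc x u)) (hfg : ∀ t ∈ Icc x u, -f t ≤ 2 * g t + ρ t / δ t / 2) :
    exp (-∫ t in x..u, f t) * √(δ u) ≤ exp (2 * ∫ t in x..u, g t) * √(δ x) := by
  have hρδ : IntervalIntegrable (fun t => ρ t / δ t) volume x u :=
    (hρ.div (HasDerivAt.continuousOn hδ) fun t ht => (hδ0 t ht).ne').intervalIntegrable_of_Icc hxu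
  have hexponent : -∫ t in x..u, f t ≤ 2 * (∫ t in x..u, g t) + (log (δ x) - log (δ u)) / 2 := by
    calc -∫ t in x..u, f t = ∫ t in x..u, -f t := integral_neg.symm
      _ ≤ ∫ t in x..u, (2 * g t + ρ t / δ t / 2) :=
        integral_mono_on hxu hf.neg ((hg.const_mul 2).add (hρδ.div_const 2)) hfg
      _ = _ := by
        rw [integral_add (hg.const_mul 2) (hρδ.div_const 2), intervalIntegral.integral_const_mul,
          intervalIntegral.integral_div, integral_div_eq_log_sub hxu hδ hδ0 hρ]
  calc exp (-∫ t in x..u, f t) * √(δ u) = exp (-(∫ t in x..u, f t) + log (δ u) / 2) := by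
        rw [sqrt_eq_exp_log_div_two (hδ0 u (right_mem_Icc.2 hxu)), exp_add]
    _ ≤ exp (2 * (∫ t in x..u, g t) + log (δ x) / 2) := exp_le_exp.2 (by linarith)
    _ = exp (2 * ∫ t in x..u, g t) * √(δ x) := by
        rw [sqrt_eq_exp_log_div_two (hδ0 x (left_mem_Icc.2 hxu)), exp_add]

structure IsScaleFunction (J : Set ℝ) (c : ℝ) (ρ s : ℝ → ℝ) : Prop where
  isOpen : IsOpen J
  ordConnected : J.OrdConnected
  mem : c ∈ J
  continuousOn_density : ContinuousOn ρ J
  pos : ∀ x ∈ J, 0 < ρ x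
  eq_integral : ∀ x ∈ J, s x = ∫ y in c..x, ρ y

/-- Condition (i) at the right end of `J`, with `q` in place of `b²/σ²`; `BddAbove` encodes
`s(r) < ∞`, and then `s(r) = sSup (s '' J)`. -/
def IsGoodRightEnd (J : Set ℝ) (s ρ q : ℝ → ℝ) : Prop :=
  BddAbove (s '' J) ∧
    ∃ z ∈ J, IntegrableOn (fun x => (sSup (s '' J) - s x) * q x / ρ x) (J ∩ Ioi z)

namespace IsScaleFunction

variable {J : Set ℝ} {c : ℝ} {ρ s f q ρt st : ℝ → ℝ}

theorem intervalIntegrable (hs : IsScaleFunction J c ρ s) {x y : ℝ} (hx : x ∈ J) (hy : y ∈ J) :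
    IntervalIntegrable ρ volume x y :=
  (hs.continuousOn_density.mono (hs.ordConnected.uIcc_subset hx hy)).intervalIntegrable

theorem sub_eq_integral (hs : IsScaleFunction J c ρ s) {x y : ℝ} (hx : x ∈ J) (hy : y ∈ J) :
    s y - s x = ∫ t in x..y, ρ t := by
  rw [hs.eq_integral x hx, hs.eq_integral y hy, integral_interval_sub_left
    (hs.intervalIntegrable hs.mem hy) (hs.intervalIntegrable hs.mem hx)]

theorem hasDerivAt (hs : IsScaleFunction J c ρ s) {x : ℝ} (hx : x ∈ J) :
    HasDerivAt s (ρ x) x := by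
  have hJ : J ∈ 𝓝 x := hs.isOpen.mem_nhds hx
  refine (integral_hasDerivAt_right (hs.intervalIntegrable hs.mem hx)
    (hs.continuousOn_density.stronglyMeasurableAtFilter hs.isOpen x hx)
    (hs.continuousOn_density.continuousAt hJ)).congr_of_eventuallyEq ?_
  filter_upwards [hJ] using hs.eq_integral

theorem continuousOn (hs : IsScaleFunction J c ρ s) : ContinuousOn s J :=
  HasDerivAt.continuousOn fun _ hx => hs.hasDerivAt hx

theorem strictMonoOn (hs : IsScaleFunction J c ρ s) : StrictMonoOn s J :=
  strictMonoOn_of_hasDerivWithinAt_pos hs.ordConnected.convex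
    (fun _ hx => (hs.hasDerivAt hx).continuousAt.continuousWithinAt)
    (fun _ hx => (hs.hasDerivAt (interior_subset hx)).hasDerivWithinAt)
    (fun x hx => hs.pos x (interior_subset hx))

theorem lt_sSup (hs : IsScaleFunction J c ρ s) (hB : BddAbove (s '' J)) {x : ℝ} (hx : x ∈ J) :
    s x < sSup (s '' J) := by
  obtain ⟨u, hxu, hu⟩ := exists_Ico_subset_of_mem_nhds (hs.isOpen.mem_nhds hx) ⟨x + 1, by simp⟩
  have hy : (x + u) / 2 ∈ J := hu ⟨by linarith, by linarith⟩
  exact (hs.strictMonoOn hx hy (by linarith)).trans_le (le_csSup hB (mem_image_of_mem s hy))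

theorem tilt (hs : IsScaleFunction J c ρ s)
    (hf : ∀ x ∈ J, ∀ y ∈ J, IntervalIntegrable f volume x y)
    (hρt : ∀ x ∈ J, ρt x = ρ x * exp (-∫ t in c..x, f t))
    (hst : ∀ x ∈ J, st x = ∫ t in c..x, ρt t) : IsScaleFunction J c ρt st where
  isOpen := hs.isOpen
  ordConnected := hs.ordConnected
  mem := hs.mem
  continuousOn_density := (hs.continuousOn_density.mul
    (continuousOn_primitive_of_isOpen hs.isOpen hs.mem hf).neg.rexp).congr hρt
  pos x hx := (hρt x hx).symm ▸ mul_pos (hs.pos x hx) (exp_pos _)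
  eq_integral := hst

theorem le_mul_div_sqrt_of_tilt (hs : IsScaleFunction J c ρ s) (ht : IsScaleFunction J c ρt st)
    (hB : BddAbove (s '' J)) (hf : ∀ x ∈ J, ∀ y ∈ J, IntervalIntegrable f volume x y)
    (hfq : ∀ x ∈ J, f x ^ 2 ≤ 4 * q x) (hρt : ∀ x ∈ J, ρt x = ρ x * exp (-∫ t in c..x, f t))
    {z : ℝ} (hg : IntegrableOn (fun t => (sSup (s '' J) - s t) * q t / ρ t) (J ∩ Ioi z))
    {x u : ℝ} (hx : x ∈ J) (hzx : z ≤ x) (hu : u ∈ J) (hxu : x ≤ u) :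
    ρt u ≤ exp (2 * ∫ t in J ∩ Ioi z, (sSup (s '' J) - s t) * q t / ρ t) * (ρt x / ρ x) *
      √(sSup (s '' J) - s x) * (ρ u / √(sSup (s '' J) - s u)) := by
  set L := sSup (s '' J)
  set g := fun t => (L - s t) * q t / ρ t
  set I := ∫ t in J ∩ Ioi z, g t
  have hxuJ : Icc x u ⊆ J := hs.ordConnected.out hx hu
  have hδ0 : ∀ t ∈ J, 0 < L - s t := fun t ht => sub_pos.2 (hs.lt_sSup hB ht)
  have hIoc : Ioc x u ⊆ J ∩ Ioi z := fun t ht =>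
    ⟨hxuJ (Ioc_subset_Icc_self ht), hzx.trans_lt ht.1⟩
  have hgI : ∫ t in x..u, g t ≤ I := by
    rw [integral_of_le hxu]
    refine setIntegral_mono_set hg (ae_restrict_of_forall_mem
      (hs.isOpen.measurableSet.inter measurableSet_Ioi) fun t ht => ?_) hIoc.eventuallyLE
    exact div_nonneg (mul_nonneg (hδ0 t ht.1).le (by nlinarith [hfq t ht.1]))
      (hs.pos t ht.1).le
  have hcmp := exp_neg_integral_mul_sqrt_le hxu (hf x hx u hu)
    ((intervalIntegrable_iff_integrableOn_Ioc_of_le hxu).2 (hg.mono_set hIoc))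
    (fun t ht => (hs.hasDerivAt (hxuJ ht)).const_sub L) (fun t ht => hδ0 t (hxuJ ht))
    (hs.continuousOn_density.mono hxuJ)
    (fun t ht => neg_le_two_mul_add_div (hδ0 t (hxuJ ht)) (hs.pos t (hxuJ ht)) (hfq t (hxuJ ht)))
  have hρtu : ρt u = ρ u * (ρt x / ρ x) * exp (-∫ t in x..u, f t) := by
    rw [hρt u hu, hρt x hx, mul_div_cancel_left₀ _ (hs.pos x hx).ne', mul_assoc,
      ← exp_add, ← integral_interval_sub_left (hf c hs.mem u hu) (hf c hs.mem x hx)]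
    ring_nf
  have hsqrt : 0 < √(L - s u) := sqrt_pos.2 (hδ0 u hu)
  have hcoef : 0 ≤ ρ u * (ρt x / ρ x) / √(L - s u) :=
    div_nonneg (mul_nonneg (hs.pos u hu).le (div_pos (ht.pos x hx) (hs.pos x hx)).le) hsqrt.le
  calc ρt u = ρ u * (ρt x / ρ x) / √(L - s u) * (exp (-∫ t in x..u, f t) * √(L - s u)) := by
        rw [hρtu]; field_simp
    _ ≤ ρ u * (ρt x / ρ x) / √(L - s u) * (exp (2 * I) * √(L - s x)) :=
        mul_le_mul_of_nonneg_left (hcmp.trans (by gcongr)) hcoef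
    _ = exp (2 * I) * (ρt x / ρ x) * √(L - s x) * (ρ u / √(L - s u)) := by ring

theorem sub_le_of_tilt (hs : IsScaleFunction J c ρ s) (ht : IsScaleFunction J c ρt st)
    (hB : BddAbove (s '' J)) (hf : ∀ x ∈ J, ∀ y ∈ J, IntervalIntegrable f volume x y)
    (hfq : ∀ x ∈ J, f x ^ 2 ≤ 4 * q x) (hρt : ∀ x ∈ J, ρt x = ρ x * exp (-∫ t in c..x, f t))
    {z : ℝ} (hg : IntegrableOn (fun t => (sSup (s '' J) - s t) * q t / ρ t) (J ∩ Ioi z))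
    {x y : ℝ} (hx : x ∈ J) (hzx : z ≤ x) (hy : y ∈ J) :
    st y - st x ≤ 2 * exp (2 * ∫ t in J ∩ Ioi z, (sSup (s '' J) - s t) * q t / ρ t) *
      (ρt x / ρ x) * (sSup (s '' J) - s x) := by
  set L := sSup (s '' J)
  have hδ0 : ∀ t ∈ J, 0 < L - s t := fun t ht => sub_pos.2 (hs.lt_sSup hB ht)
  have hρx : 0 < ρt x / ρ x := div_pos (ht.pos x hx) (hs.pos x hx)
  rcases le_total y x with hyx | hxy
  · have := mul_nonneg (mul_nonneg (mul_nonneg zero_le_two (exp_pos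
      (2 * ∫ t in J ∩ Ioi z, (L - s t) * q t / ρ t)).le) hρx.le) (hδ0 x hx).le
    linarith [ht.strictMonoOn.monotoneOn hy hx hyx]
  set K := exp (2 * ∫ t in J ∩ Ioi z, (L - s t) * q t / ρ t) * (ρt x / ρ x) * √(L - s x)
  have hK : 0 ≤ K := mul_nonneg (mul_nonneg (exp_pos _).le hρx.le) (sqrt_nonneg _)
  have hxyJ : Icc x y ⊆ J := hs.ordConnected.out hx hy
  have hδ : ∀ t ∈ Icc x y, HasDerivAt (fun t => L - s t) (-ρ t) t :=
    fun t ht => (hs.hasDerivAt (hxyJ ht)).const_sub L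
  calc st y - st x = ∫ t in x..y, ρt t := ht.sub_eq_integral hx hy
    _ ≤ ∫ t in x..y, K * (ρ t / √(L - s t)) := by
        refine integral_mono_on hxy (ht.intervalIntegrable hx hy) ?_
          fun u hu => hs.le_mul_div_sqrt_of_tilt ht hB hf hfq hρt hg hx hzx (hxyJ hu) hu.1
        refine (ContinuousOn.intervalIntegrable_of_Icc hxy ?_).const_mul K
        exact (hs.continuousOn_density.mono hxyJ).div (HasDerivAt.continuousOn hδ).sqrt
          fun t ht => (sqrt_pos.2 (hδ0 t (hxyJ ht))).ne'
    _ = K * ∫ t in x..y, ρ t / √(L - s t) := intervalIntegral.integral_const_mul _ _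
    _ ≤ K * (2 * √(L - s x)) := mul_le_mul_of_nonneg_left (integral_div_sqrt_le hxy hδ
          (fun t ht => hδ0 t (hxyJ ht)) (hs.continuousOn_density.mono hxyJ)) hK
    _ = 2 * exp (2 * ∫ t in J ∩ Ioi z, (L - s t) * q t / ρ t) * (ρt x / ρ x) * (L - s x) := by
        linear_combination 2 * exp (2 * ∫ t in J ∩ Ioi z, (L - s t) * q t / ρ t) *
          (ρt x / ρ x) * mul_self_sqrt (hδ0 x hx).le

theorem sSup_sub_le_of_tilt (hs : IsScaleFunction J c ρ s) (ht : IsScaleFunction J c ρt st)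
    (hB : BddAbove (s '' J)) (hf : ∀ x ∈ J, ∀ y ∈ J, IntervalIntegrable f volume x y)
    (hfq : ∀ x ∈ J, f x ^ 2 ≤ 4 * q x) (hρt : ∀ x ∈ J, ρt x = ρ x * exp (-∫ t in c..x, f t))
    {z : ℝ} (hg : IntegrableOn (fun t => (sSup (s '' J) - s t) * q t / ρ t) (J ∩ Ioi z))
    {x : ℝ} (hx : x ∈ J) (hzx : z ≤ x) :
    sSup (st '' J) - st x ≤ 2 * exp (2 * ∫ t in J ∩ Ioi z, (sSup (s '' J) - s t) * q t / ρ t) *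
      (ρt x / ρ x) * (sSup (s '' J) - s x) :=
  sub_le_iff_le_add'.2 <| csSup_le ⟨st c, mem_image_of_mem st hs.mem⟩ <| forall_mem_image.2
    fun _ hy => sub_le_iff_le_add'.1 (hs.sub_le_of_tilt ht hB hf hfq hρt hg hx hzx hy)

theorem isGoodRightEnd_of_tilt (hs : IsScaleFunction J c ρ s) (ht : IsScaleFunction J c ρt st)
    (hf : ∀ x ∈ J, ∀ y ∈ J, IntervalIntegrable f volume x y)
    (hfq : ∀ x ∈ J, f x ^ 2 ≤ 4 * q x) (hρt : ∀ x ∈ J, ρt x = ρ x * exp (-∫ t in c..x, f t))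
    (h : IsGoodRightEnd J s ρ q) : IsGoodRightEnd J st ρt q := by
  obtain ⟨hB, z, hz, hg⟩ := h
  set C := 2 * exp (2 * ∫ t in J ∩ Ioi z, (sSup (s '' J) - s t) * q t / ρ t)
  have hBt : BddAbove (st '' J) := ⟨_, forall_mem_image.2 fun _ hy =>
    sub_le_iff_le_add'.1 (hs.sub_le_of_tilt ht hB hf hfq hρt hg hz le_rfl hy)⟩
  refine ⟨hBt, z, hz, ?_⟩
  -- the tilted integrand is the original one times this ratio, which is bounded by `C`
  set R := fun x => (sSup (st '' J) - st x) * ρ x / (ρt x * (sSup (s '' J) - s x))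
  have hR : ∀ x ∈ J ∩ Ioi z, ‖R x‖ ≤ C := by
    rintro x ⟨hx, hzx⟩
    have hδ := sub_pos.2 (hs.lt_sSup hB hx)
    have hρ := hs.pos x hx
    have hρtx := ht.pos x hx
    have hR0 : 0 ≤ R x := div_nonneg (mul_nonneg
      (sub_nonneg.2 (le_csSup hBt (mem_image_of_mem st hx))) hρ.le) (by positivity)
    rw [norm_of_nonneg hR0, div_le_iff₀ (by positivity)]
    calc (sSup (st '' J) - st x) * ρ x ≤ C * (ρt x / ρ x) * (sSup (s '' J) - s x) * ρ x :=
          mul_le_mul_of_nonneg_right (hs.sSup_sub_le_of_tilt ht hB hf hfq hρt hg hx hzx.le) hρ.le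
      _ = C * (ρt x * (sSup (s '' J) - s x)) := by field_simp
  have hJz : MeasurableSet (J ∩ Ioi z) := hs.isOpen.measurableSet.inter measurableSet_Ioi
  refine IntegrableOn.congr_fun (hg.bdd_mul (c := C) ?_ (ae_restrict_of_forall_mem hJz hR))
    (fun x hx => ?_) hJz
  · refine ContinuousOn.aestronglyMeasurable (ContinuousOn.mono ?_ inter_subset_left) hJz
    exact ((continuousOn_const.sub ht.continuousOn).mul hs.continuousOn_density).div
      (ht.continuousOn_density.mul (continuousOn_const.sub hs.continuousOn))
      fun x hx => (mul_pos (ht.pos x hx) (sub_pos.2 (hs.lt_sSup hB hx))).ne'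
  · have := hs.pos x hx.1
    have := ht.pos x hx.1
    have := sub_pos.2 (hs.lt_sSup hB hx.1)
    simp only [R]
    field_simp

theorem isGoodRightEnd_tilt_iff (hs : IsScaleFunction J c ρ s)
    (hf : ∀ x ∈ J, ∀ y ∈ J, IntervalIntegrable f volume x y)
    (hfq : ∀ x ∈ J, f x ^ 2 ≤ 4 * q x) (hρt : ∀ x ∈ J, ρt x = ρ x * exp (-∫ t in c..x, f t))
    (hst : ∀ x ∈ J, st x = ∫ t in c..x, ρt t) :
    IsGoodRightEnd J s ρ q ↔ IsGoodRightEnd J st ρt q := by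
  have ht := hs.tilt hf hρt hst
  refine ⟨hs.isGoodRightEnd_of_tilt ht hf hfq hρt,
    ht.isGoodRightEnd_of_tilt hs (f := -f) (fun x hx y hy => (hf x hx y hy).neg)
      (fun x hx => by simpa using hfq x hx) fun x hx => ?_⟩
  rw [hρt x hx]
  simp only [Pi.neg_apply, intervalIntegral.integral_neg, neg_neg]
  rw [mul_assoc, ← exp_add, neg_add_cancel, exp_zero, mul_one]

end IsScaleFunction

theorem good_right_endpoint_equiv_general
    (l r : EReal)
    (J : Set ℝ) (hJdef : J = {x : ℝ | l < (x : EReal) ∧ (x : EReal) < r})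
    (μ σ b : ℝ → ℝ) (hσm : Measurable σ) (hbm : Measurable b)
    (hloc2 : ∀ K : Set ℝ, K ⊆ J → IsCompact K →
      IntegrableOn (fun x => μ x / σ x ^ 2) K volume)
    (hloc3 : ∀ K : Set ℝ, K ⊆ J → IsCompact K →
      IntegrableOn (fun x => b x ^ 2 / σ x ^ 2) K volume)
    (c : ℝ) (hc : c ∈ J)
    (ρ ρt s st : ℝ → ℝ)
    (hρ : ∀ x ∈ J, ρ x = Real.exp (-(∫ y in c..x, 2 * μ y / σ y ^ 2)))
    (hρt : ∀ x ∈ J, ρt x = ρ x * Real.exp (-(∫ y in c..x, 2 * b y / σ y)))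
    (hs : ∀ x ∈ J, s x = ∫ y in c..x, ρ y)
    (hst : ∀ x ∈ J, st x = ∫ y in c..x, ρt y) :
    (BddAbove (s '' J) ∧
      ∃ z ∈ J, IntegrableOn
        (fun x => (sSup (s '' J) - s x) * b x ^ 2 / (ρ x * σ x ^ 2)) (J ∩ Ioi z) volume) ↔
    (BddAbove (st '' J) ∧
      ∃ z ∈ J, IntegrableOn
        (fun x => (sSup (st '' J) - st x) * b x ^ 2 / (ρt x * σ x ^ 2)) (J ∩ Ioi z) volume) := by
  have hJo : IsOpen J := hJdef ▸ isOpen_Ioo.preimage continuous_coe_real_ereal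
  have hJc : J.OrdConnected := hJdef ▸ ordConnected_Ioo.preimage_mono EReal.coe_strictMono.monotone
  have hlocal : ∀ {g : ℝ → ℝ}, (∀ K ⊆ J, IsCompact K → IntegrableOn g K) →
      ∀ x ∈ J, ∀ y ∈ J, IntervalIntegrable g volume x y := fun hg x hx y hy =>
    (hg _ (hJc.uIcc_subset hx hy) isCompact_uIcc).intervalIntegrable
  have hμ : ∀ x ∈ J, ∀ y ∈ J, IntervalIntegrable (fun t => 2 * μ t / σ t ^ 2) volume x y :=
    hlocal fun K hK hKc => by
      simpa only [IntegrableOn, mul_div_assoc] using (hloc2 K hK hKc).const_mul 2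
  have hb : ∀ x ∈ J, ∀ y ∈ J, IntervalIntegrable (fun t => 2 * b t / σ t) volume x y :=
    hlocal fun K hK hKc => by
      have h := integrableOn_of_integrableOn_sq (g := fun x => b x / σ x)
        hKc.measure_lt_top.ne (hbm.div hσm).aestronglyMeasurable
        (by simpa only [div_pow] using hloc3 K hK hKc)
      simpa only [IntegrableOn, mul_div_assoc] using h.const_mul 2
  have hscale : IsScaleFunction J c ρ s :=
    ⟨hJo, hJc, hc, (continuousOn_primitive_of_isOpen hJo hc hμ).neg.rexp.congr hρ,
      fun x hx => (hρ x hx).symm ▸ exp_pos _, hs⟩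
  have := hscale.isGoodRightEnd_tilt_iff (q := fun x => b x ^ 2 / σ x ^ 2) hb
    (fun x _ => le_of_eq (by ring)) hρt hst
  simpa only [IsGoodRightEnd, mul_div_assoc', div_div, mul_comm (σ _ ^ 2)] using this

/-- **Equivalence of the two characterizations of the right endpoint `r` being good.**
Let `J = (l, r)` (modelled by `l r : EReal`), fix `c ∈ J`, let `μ, σ : J → ℝ` satisfy the
Engelbert–Schmidt conditions and let `b : J → ℝ` be Borel with `b²/σ² ∈ L¹_loc(J)`.  With
`ρ(x) = exp(-∫_c^x 2μ/σ²)`, `ρ̃(x) = ρ(x)·exp(-∫_c^x 2b/σ)`, `s = ∫_c^· ρ`, `s̃ = ∫_c^· ρ̃`,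
the following are equivalent (monotone limits being encoded by `BddAbove` and `sSup`):
(i) `s(r) < ∞` and `(s(r) - s)·b²/(ρσ²) ∈ L¹_loc(r-)`;
(ii) `s̃(r) < ∞` and `(s̃(r) - s̃)·b²/(ρ̃σ²) ∈ L¹_loc(r-)`. -/
theorem good_right_endpoint_equiv
    (l r : EReal) (hlr : l < r)
    (J : Set ℝ) (hJdef : J = {x : ℝ | l < (x : EReal) ∧ (x : EReal) < r})
    (μ σ b : ℝ → ℝ) (hμm : Measurable μ) (hσm : Measurable σ) (hbm : Measurable b)
    (hσ0 : ∀ x ∈ J, σ x ≠ 0)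
    (hloc1 : ∀ K : Set ℝ, K ⊆ J → IsCompact K →
      IntegrableOn (fun x => 1 / σ x ^ 2) K volume)
    (hloc2 : ∀ K : Set ℝ, K ⊆ J → IsCompact K →
      IntegrableOn (fun x => μ x / σ x ^ 2) K volume)
    (hloc3 : ∀ K : Set ℝ, K ⊆ J → IsCompact K →
      IntegrableOn (fun x => b x ^ 2 / σ x ^ 2) K volume)
    (c : ℝ) (hc : c ∈ J)
    (ρ ρt s st : ℝ → ℝ)
    (hρ : ∀ x ∈ J, ρ x = Real.exp (-(∫ y in c..x, 2 * μ y / σ y ^ 2)))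
    (hρt : ∀ x ∈ J, ρt x = ρ x * Real.exp (-(∫ y in c..x, 2 * b y / σ y)))
    (hs : ∀ x ∈ J, s x = ∫ y in c..x, ρ y)
    (hst : ∀ x ∈ J, st x = ∫ y in c..x, ρt y) :
    (BddAbove (s '' J) ∧
      ∃ z ∈ J, IntegrableOn
        (fun x => (sSup (s '' J) - s x) * b x ^ 2 / (ρ x * σ x ^ 2)) (J ∩ Ioi z) volume) ↔
    (BddAbove (st '' J) ∧
      ∃ z ∈ J, IntegrableOn
        (fun x => (sSup (st '' J) - st x) * b x ^ 2 / (ρt x * σ x ^ 2)) (J ∩ Ioi z) volume) :=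
  good_right_endpoint_equiv_general l r J hJdef μ σ b hσm hbm hloc2 hloc3 c hc ρ ρt s st hρ hρt hs
    hst
end

section
/- A separating time is almost surely unique: if S and S′ are both separating times for (Ω, F, (F_t), P, P̃), then S = S′ holds P-almost surely and P̃-almost surely. -/
open MeasureTheory
open scoped ENNReal NNReal

/-- `A` belongs to the σ-field `F_τ = {A ∈ F : A ∩ {τ ≤ t} ∈ F_t for all t}` associated with the
stopping time `τ`.  Here the filtration is indexed by `t ∈ [0,∞] = ℝ≥0∞`, with `𝓕 ∞ = F` (the
full σ-field `m`), so this coincides with the definition in the paper, where the condition is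
required for `t ∈ [0,∞)` and membership in `F` is required separately. -/
def MemSigmaAt {Ω : Type*} {m : MeasurableSpace Ω} (𝓕 : Filtration ℝ≥0∞ m)
    (τ : Ω → ℝ≥0∞) (A : Set Ω) : Prop :=
  ∀ t : ℝ≥0∞, MeasurableSet[𝓕 t] (A ∩ {ω | τ ω ≤ t})

/-- `S : Ω → [0,∞] ∪ {δ}` (modelled as `WithTop ℝ≥0∞`, where the extra top point `⊤` plays the
role of `δ`, lying above `∞ = ((⊤ : ℝ≥0∞) : WithTop ℝ≥0∞)`) is an extended stopping time:
`{S ≤ t} ∈ F_t` for every `t ∈ [0,∞]`. -/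
def IsExtendedStoppingTime {Ω : Type*} {m : MeasurableSpace Ω} (𝓕 : Filtration ℝ≥0∞ m)
    (S : Ω → WithTop ℝ≥0∞) : Prop :=
  ∀ t : ℝ≥0∞, MeasurableSet[𝓕 t] {ω | S ω ≤ (t : WithTop ℝ≥0∞)}

/-- `S` is a separating time for `(Ω, F, (F_t), P, P̃)`: `S` is an extended stopping time such
that for every `(F_t)`-stopping time `τ` (with values in `[0,∞]`), the restrictions `P̃_τ` and
`P_τ` of `P̃` and `P` to `F_τ` are equivalent on `{τ < S}` (they have the same null sets there)
and mutually singular on `{τ ≥ S}`. -/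
def IsSeparatingTime {Ω : Type*} {m : MeasurableSpace Ω} (𝓕 : Filtration ℝ≥0∞ m)
    (P Pt : Measure Ω) (S : Ω → WithTop ℝ≥0∞) : Prop :=
  IsExtendedStoppingTime 𝓕 S ∧
  ∀ τ : Ω → ℝ≥0∞, IsStoppingTime 𝓕 (fun ω => (τ ω : WithTop ℝ≥0∞)) →
    (∀ A : Set Ω, MemSigmaAt 𝓕 τ A →
      (Pt (A ∩ {ω | (τ ω : WithTop ℝ≥0∞) < S ω}) = 0 ↔
        P (A ∩ {ω | (τ ω : WithTop ℝ≥0∞) < S ω}) = 0)) ∧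
    (∃ D : Set Ω, MemSigmaAt 𝓕 τ D ∧
      P (D ∩ {ω | S ω ≤ (τ ω : WithTop ℝ≥0∞)}) = 0 ∧
      Pt (Dᶜ ∩ {ω | S ω ≤ (τ ω : WithTop ℝ≥0∞)}) = 0)

/-! Fix a deterministic time `q`. The separating time `S` yields an `F_q`-set `D` splitting
`{S ≤ q}` into a `P`-null and a `P̃`-null part, while `S'` makes `P` and `P̃` equivalent on
`{q < S'}` for `F_q`-events. Hence both parts of `{S ≤ q < S'}` are null for both measures.
Every `ω` with `S ω < S' ω` lies in such a set for `q` in a fixed countable set, so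
`{S < S'}` is null, and by symmetry so is `{S' < S}`. -/

lemma memSigmaAt_const {Ω : Type*} {m : MeasurableSpace Ω} {𝓕 : Filtration ℝ≥0∞ m}
    {q : ℝ≥0∞} {A : Set Ω} (hA : MeasurableSet[𝓕 q] A) :
    MemSigmaAt 𝓕 (fun _ => q) A := by
  intro t
  by_cases h : q ≤ t
  · simpa [h] using 𝓕.mono h _ hA
  · simp [h]

lemma measure_inter_eq_zero_of_equiv_of_singular {Ω : Type*} {m' m : MeasurableSpace Ω}
    {μ ν : Measure Ω} {X L D : Set Ω}
    (hequiv : ∀ A, MeasurableSet[m'] A → (ν (A ∩ X) = 0 ↔ μ (A ∩ X) = 0))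
    (hL : MeasurableSet[m'] L) (hD : MeasurableSet[m'] D)
    (hμ : μ (D ∩ L) = 0) (hν : ν (Dᶜ ∩ L) = 0) :
    μ (L ∩ X) = 0 ∧ ν (L ∩ X) = 0 := by
  have hμD : μ (L ∩ D ∩ X) = 0 := measure_mono_null
    (Set.inter_subset_left.trans (Set.inter_comm L D).subset) hμ
  have hνDc : ν (L ∩ Dᶜ ∩ X) = 0 := measure_mono_null
    (Set.inter_subset_left.trans (Set.inter_comm L Dᶜ).subset) hν
  have hνD : ν (L ∩ D ∩ X) = 0 := (hequiv _ (hL.inter hD)).2 hμD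
  have hμDc : μ (L ∩ Dᶜ ∩ X) = 0 := (hequiv _ (hL.inter hD.compl)).1 hνDc
  have hsplit : L ∩ X = (L ∩ D ∩ X) ∪ (L ∩ Dᶜ ∩ X) := by
    rw [← Set.union_inter_distrib_right, Set.inter_union_compl]
  rw [hsplit]
  exact ⟨measure_union_null hμD hμDc, measure_union_null hνD hνDc⟩

lemma measure_setOf_lt_eq_zero_of_between {Ω α β : Type*} [MeasurableSpace Ω] [LinearOrder β]
    {μ : Measure Ω} {f g : Ω → β} (e : α → β) {C : Set α} (hC : C.Countable)
    (hdense : ∀ a b, a < b → ∃ q ∈ C, a ≤ e q ∧ e q < b)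
    (hnull : ∀ q ∈ C, μ {ω | f ω ≤ e q ∧ e q < g ω} = 0) :
    μ {ω | f ω < g ω} = 0 := by
  refine measure_mono_null (fun ω hω => ?_) ((measure_biUnion_null_iff hC).2 hnull)
  obtain ⟨q, hq, hfq, hqg⟩ := hdense _ _ hω
  exact Set.mem_biUnion hq ⟨hfq, hqg⟩

lemma exists_countable_ennreal_between :
    ∃ C : Set ℝ≥0∞, C.Countable ∧ ∀ a b : WithTop ℝ≥0∞, a < b →
      ∃ q ∈ C, a ≤ (q : WithTop ℝ≥0∞) ∧ (q : WithTop ℝ≥0∞) < b := by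
  obtain ⟨C, hC, hdense, -, htop⟩ := exists_countable_dense_bot_top ℝ≥0∞
  refine ⟨C, hC, fun a b hab => ?_⟩
  lift a to ℝ≥0∞ using hab.ne_top
  induction b using WithTop.recTopCoe with
  | top => exact ⟨⊤, htop ⊤ isTop_top, WithTop.coe_le_coe.2 le_top, WithTop.coe_lt_top _⟩
  | coe b =>
    obtain ⟨q, hq, haq, hqb⟩ := hdense.exists_between (WithTop.coe_lt_coe.1 hab)
    exact ⟨q, hq, WithTop.coe_le_coe.2 haq.le, WithTop.coe_lt_coe.2 hqb⟩

namespace IsSeparatingTime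

variable {Ω : Type*} {m : MeasurableSpace Ω} {𝓕 : Filtration ℝ≥0∞ m} {P Pt : Measure Ω}
  {S S' : Ω → WithTop ℝ≥0∞}

lemma measure_le_lt_eq_zero (hS : IsSeparatingTime 𝓕 P Pt S)
    (hS' : IsSeparatingTime 𝓕 P Pt S') (q : ℝ≥0∞) :
    P {ω | S ω ≤ q ∧ (q : WithTop ℝ≥0∞) < S' ω} = 0 ∧
    Pt {ω | S ω ≤ q ∧ (q : WithTop ℝ≥0∞) < S' ω} = 0 := by
  obtain ⟨-, D, hD, hPD, hPtD⟩ := hS.2 _ (isStoppingTime_const 𝓕 q)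
  have hequiv := (hS'.2 _ (isStoppingTime_const 𝓕 q)).1
  exact measure_inter_eq_zero_of_equiv_of_singular (m' := 𝓕 q)
    (fun A hA => hequiv A (memSigmaAt_const hA)) (hS.1 q) (by simpa using hD q) hPD hPtD

lemma measure_lt_eq_zero (hS : IsSeparatingTime 𝓕 P Pt S)
    (hS' : IsSeparatingTime 𝓕 P Pt S') :
    P {ω | S ω < S' ω} = 0 ∧ Pt {ω | S ω < S' ω} = 0 := by
  obtain ⟨C, hC, hdense⟩ := exists_countable_ennreal_between
  exact ⟨measure_setOf_lt_eq_zero_of_between _ hC hdense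
      fun q _ => (measure_le_lt_eq_zero hS hS' q).1,
    measure_setOf_lt_eq_zero_of_between _ hC hdense
      fun q _ => (measure_le_lt_eq_zero hS hS' q).2⟩

end IsSeparatingTime

theorem separating_time_unique_general {Ω : Type*} {m : MeasurableSpace Ω}
    (𝓕 : Filtration ℝ≥0∞ m)
    (P Pt : Measure Ω)
    (S S' : Ω → WithTop ℝ≥0∞)
    (hS : IsSeparatingTime 𝓕 P Pt S) (hS' : IsSeparatingTime 𝓕 P Pt S') :
    P {ω | S ω ≠ S' ω} = 0 ∧ Pt {ω | S ω ≠ S' ω} = 0 := by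
  have hne : {ω | S ω ≠ S' ω} = {ω | S ω < S' ω} ∪ {ω | S' ω < S ω} := by
    ext ω
    exact ne_iff_lt_or_gt
  obtain ⟨hP, hPt⟩ := hS.measure_lt_eq_zero hS'
  obtain ⟨hP', hPt'⟩ := hS'.measure_lt_eq_zero hS
  rw [hne]
  exact ⟨measure_union_null hP hP', measure_union_null hPt hPt'⟩

/-- **A.s. uniqueness of the separating time** (part (ii) of Proposition on separating times).
If `S` and `S'` are both separating times for `(Ω, F, (F_t), P, P̃)` (with right-continuous
filtration `(F_t)` and `F_∞ := F`), then `S = S'` holds `P`-a.s. and `P̃`-a.s. -/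
theorem separating_time_unique {Ω : Type*} {m : MeasurableSpace Ω}
    (𝓕 : Filtration ℝ≥0∞ m) (htop : 𝓕 ⊤ = m)
    (hrc : ∀ t : ℝ≥0∞, t ≠ ⊤ → 𝓕 t = ⨅ s : {s : ℝ≥0∞ // t < s ∧ s ≠ ⊤}, 𝓕 s.1)
    (P Pt : Measure Ω) [IsProbabilityMeasure P] [IsProbabilityMeasure Pt]
    (S S' : Ω → WithTop ℝ≥0∞)
    (hS : IsSeparatingTime 𝓕 P Pt S) (hS' : IsSeparatingTime 𝓕 P Pt S') :
    P {ω | S ω ≠ S' ω} = 0 ∧ Pt {ω | S ω ≠ S' ω} = 0 :=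
  separating_time_unique_general 𝓕 P Pt S S' hS hS'
end

section
/- Let S be a separating time for (Ω, F, (F_t), P, P̃). Then: (i) P̃ ⊥ P (mutually singular on F) if and only if S ≤ ∞ holds both P-a.s. and P̃-a.s., which in turn holds if and only if S ≤ ∞ holds P-a.s.; (ii) P̃_0 ⊥ P_0 (the restrictions to F_0 are mutually singular) if and only if S = 0 holds both P-a.s. and P̃-a.s., which in turn holds if and only if S = 0 holds P-a.s. -/
open MeasureTheory
open scoped ENNReal NNReal

/-! Only the deterministic times `c = ∞` and `c = 0` are needed. If `{c < S}` is null for both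
measures, their singularity on `{S ≤ c}` along `F_c` is singularity on all of `Ω`. Conversely, a
singularity set `D ∈ F_c` splits `{c < S}` into a `P`-null and a `P̃`-null part, and equivalence on
`{c < S}` along `F_c` makes the latter `P`-null too; with `A = Ω`, the same equivalence shows that
`{c < S}` is `P`-null iff it is `P̃`-null. -/

open Set

theorem memSigmaAt_const_iff {Ω : Type*} {m : MeasurableSpace Ω} (𝓕 : Filtration ℝ≥0∞ m)
    (c : ℝ≥0∞) (A : Set Ω) : MemSigmaAt 𝓕 (fun _ => c) A ↔ MeasurableSet[𝓕 c] A := by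
  refine ⟨fun hA => by simpa using hA c, fun hA t => ?_⟩
  by_cases hct : c ≤ t
  · simp only [hct, ofPred_true, inter_univ]
    exact 𝓕.mono hct _ hA
  · simp only [hct, ofPred_false, inter_empty]
    exact @MeasurableSet.empty Ω (𝓕 t)

theorem exists_null_compl_null_iff_of_equiv_on {Ω : Type*} {m' : MeasurableSpace Ω}
    [MeasurableSpace Ω] {μ ν : Measure Ω} {E : Set Ω}
    (hequiv : ∀ A, MeasurableSet[m'] A → (ν (A ∩ E) = 0 ↔ μ (A ∩ E) = 0))
    (hsing : ∃ D, MeasurableSet[m'] D ∧ μ (D ∩ Eᶜ) = 0 ∧ ν (Dᶜ ∩ Eᶜ) = 0) :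
    (∃ D, MeasurableSet[m'] D ∧ μ D = 0 ∧ ν Dᶜ = 0) ↔ μ E = 0 ∧ ν E = 0 := by
  have hnull : ν E = 0 ↔ μ E = 0 := by simpa using hequiv univ (@MeasurableSet.univ Ω m')
  constructor
  · rintro ⟨D, hD, hμD, hνDc⟩
    have hμDc : μ (Dᶜ ∩ E) = 0 :=
      (hequiv Dᶜ hD.compl).1 (measure_inter_null_of_null_left E hνDc)
    have hμE : μ E = 0 := by
      rw [← inter_union_compl E D]
      exact measure_union_null (measure_mono_null inter_subset_right hμD)
        (by rwa [inter_comm])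
    exact ⟨hμE, hnull.2 hμE⟩
  · rintro ⟨hμE, hνE⟩
    obtain ⟨D, hD, hμD, hνDc⟩ := hsing
    refine ⟨D, hD, ?_, ?_⟩
    · rw [← inter_union_compl D E]
      exact measure_union_null (measure_inter_null_of_null_right D hμE) hμD
    · rw [← inter_union_compl Dᶜ E]
      exact measure_union_null (measure_inter_null_of_null_right Dᶜ hνE) hνDc

namespace IsSeparatingTime

variable {Ω : Type*} {m : MeasurableSpace Ω} {𝓕 : Filtration ℝ≥0∞ m} {P Pt : Measure Ω}
  {S : Ω → WithTop ℝ≥0∞}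

theorem equiv_const (hS : IsSeparatingTime 𝓕 P Pt S) (c : ℝ≥0∞) (A : Set Ω)
    (hA : MeasurableSet[𝓕 c] A) :
    Pt (A ∩ {ω | (c : WithTop ℝ≥0∞) < S ω}) = 0 ↔ P (A ∩ {ω | (c : WithTop ℝ≥0∞) < S ω}) = 0 :=
  (hS.2 _ (isStoppingTime_const 𝓕 c)).1 A ((memSigmaAt_const_iff 𝓕 c A).2 hA)

theorem singular_const (hS : IsSeparatingTime 𝓕 P Pt S) (c : ℝ≥0∞) :
    ∃ D, MeasurableSet[𝓕 c] D ∧ P (D ∩ {ω | (c : WithTop ℝ≥0∞) < S ω}ᶜ) = 0 ∧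
      Pt (Dᶜ ∩ {ω | (c : WithTop ℝ≥0∞) < S ω}ᶜ) = 0 := by
  obtain ⟨D, hD, hPD, hPtDc⟩ := (hS.2 _ (isStoppingTime_const 𝓕 c)).2
  simp only [compl_ofPred, not_lt]
  exact ⟨D, (memSigmaAt_const_iff 𝓕 c D).1 hD, hPD, hPtDc⟩

theorem measure_lt_eq_zero_iff (hS : IsSeparatingTime 𝓕 P Pt S) (c : ℝ≥0∞) :
    Pt {ω | (c : WithTop ℝ≥0∞) < S ω} = 0 ↔ P {ω | (c : WithTop ℝ≥0∞) < S ω} = 0 := by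
  simpa using hS.equiv_const c univ MeasurableSet.univ

theorem exists_null_compl_null_iff (hS : IsSeparatingTime 𝓕 P Pt S) (c : ℝ≥0∞) :
    (∃ D, MeasurableSet[𝓕 c] D ∧ P D = 0 ∧ Pt Dᶜ = 0) ↔
      P {ω | (c : WithTop ℝ≥0∞) < S ω} = 0 ∧ Pt {ω | (c : WithTop ℝ≥0∞) < S ω} = 0 :=
  exists_null_compl_null_iff_of_equiv_on (hS.equiv_const c) (hS.singular_const c)

end IsSeparatingTime

theorem separating_time_singular_general {Ω : Type*} {m : MeasurableSpace Ω}
    (𝓕 : Filtration ℝ≥0∞ m) (htop : 𝓕 ⊤ = m)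
    (P Pt : Measure Ω)
    (S : Ω → WithTop ℝ≥0∞) (hS : IsSeparatingTime 𝓕 P Pt S) :
    (((Pt ⟂ₘ P) ↔
        (P {ω | ((⊤ : ℝ≥0∞) : WithTop ℝ≥0∞) < S ω} = 0 ∧
          Pt {ω | ((⊤ : ℝ≥0∞) : WithTop ℝ≥0∞) < S ω} = 0)) ∧
      ((P {ω | ((⊤ : ℝ≥0∞) : WithTop ℝ≥0∞) < S ω} = 0 ∧
          Pt {ω | ((⊤ : ℝ≥0∞) : WithTop ℝ≥0∞) < S ω} = 0) ↔
        P {ω | ((⊤ : ℝ≥0∞) : WithTop ℝ≥0∞) < S ω} = 0)) ∧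
    (((∃ D : Set Ω, MeasurableSet[𝓕 0] D ∧ P D = 0 ∧ Pt Dᶜ = 0) ↔
        (P {ω | S ω ≠ ((0 : ℝ≥0∞) : WithTop ℝ≥0∞)} = 0 ∧
          Pt {ω | S ω ≠ ((0 : ℝ≥0∞) : WithTop ℝ≥0∞)} = 0)) ∧
      ((P {ω | S ω ≠ ((0 : ℝ≥0∞) : WithTop ℝ≥0∞)} = 0 ∧
          Pt {ω | S ω ≠ ((0 : ℝ≥0∞) : WithTop ℝ≥0∞)} = 0) ↔
        P {ω | S ω ≠ ((0 : ℝ≥0∞) : WithTop ℝ≥0∞)} = 0)) := by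
  have hpos : {ω | ((0 : ℝ≥0∞) : WithTop ℝ≥0∞) < S ω} =
      {ω | S ω ≠ ((0 : ℝ≥0∞) : WithTop ℝ≥0∞)} :=
    ext fun ω => bot_lt_iff_ne_bot (a := S ω)
  have hsingular_top := hS.exists_null_compl_null_iff ⊤
  rw [htop] at hsingular_top
  have hsingular_zero := hS.exists_null_compl_null_iff 0
  rw [hpos] at hsingular_zero
  have hnull_zero := hS.measure_lt_eq_zero_iff 0
  rw [hpos] at hnull_zero
  refine ⟨⟨Measure.MutuallySingular.comm.trans hsingular_top, ?_⟩, hsingular_zero, ?_⟩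
  · exact and_iff_left_of_imp (hS.measure_lt_eq_zero_iff ⊤).2
  · exact and_iff_left_of_imp hnull_zero.2

/-- **Separating time and singularity** (Lemma on separating times, (v)–(vi)).
Let `S` be a separating time for `(Ω, F, (F_t), P, P̃)` (right-continuous filtration,
`F_∞ := F`, `P`, `P̃` probability measures).  Then:
(i) `P̃ ⊥ P` (on `F`) iff `S ≤ ∞` holds `P`-a.s. and `P̃`-a.s., which in turn holds iff
`S ≤ ∞` holds `P`-a.s. (the set `{¬ S ≤ ∞} = {∞ < S}` is a null set);
(ii) `P̃₀ ⊥ P₀` (the restrictions to `F_0` are mutually singular) iff `S = 0` holds `P`-a.s.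
and `P̃`-a.s., which in turn holds iff `S = 0` holds `P`-a.s. -/
theorem separating_time_singular {Ω : Type*} {m : MeasurableSpace Ω}
    (𝓕 : Filtration ℝ≥0∞ m) (htop : 𝓕 ⊤ = m)
    (hrc : ∀ t : ℝ≥0∞, t ≠ ⊤ → 𝓕 t = ⨅ s : {s : ℝ≥0∞ // t < s ∧ s ≠ ⊤}, 𝓕 s.1)
    (P Pt : Measure Ω) [IsProbabilityMeasure P] [IsProbabilityMeasure Pt]
    (S : Ω → WithTop ℝ≥0∞) (hS : IsSeparatingTime 𝓕 P Pt S) :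
    (((Pt ⟂ₘ P) ↔
        (P {ω | ((⊤ : ℝ≥0∞) : WithTop ℝ≥0∞) < S ω} = 0 ∧
          Pt {ω | ((⊤ : ℝ≥0∞) : WithTop ℝ≥0∞) < S ω} = 0)) ∧
      ((P {ω | ((⊤ : ℝ≥0∞) : WithTop ℝ≥0∞) < S ω} = 0 ∧
          Pt {ω | ((⊤ : ℝ≥0∞) : WithTop ℝ≥0∞) < S ω} = 0) ↔
        P {ω | ((⊤ : ℝ≥0∞) : WithTop ℝ≥0∞) < S ω} = 0)) ∧
    (((∃ D : Set Ω, MeasurableSet[𝓕 0] D ∧ P D = 0 ∧ Pt Dᶜ = 0) ↔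
        (P {ω | S ω ≠ ((0 : ℝ≥0∞) : WithTop ℝ≥0∞)} = 0 ∧
          Pt {ω | S ω ≠ ((0 : ℝ≥0∞) : WithTop ℝ≥0∞)} = 0)) ∧
      ((P {ω | S ω ≠ ((0 : ℝ≥0∞) : WithTop ℝ≥0∞)} = 0 ∧
          Pt {ω | S ω ≠ ((0 : ℝ≥0∞) : WithTop ℝ≥0∞)} = 0) ↔
        P {ω | S ω ≠ ((0 : ℝ≥0∞) : WithTop ℝ≥0∞)} = 0)) :=
  separating_time_singular_general 𝓕 htop P Pt S hS
end

section
/- On the canonical space of possibly exiting continuous paths, for every t ∈ [0,∞] (with F_∞ := F) one has ⋁_{n∈ℕ} F_{t∧τ_n} = F_t, where F_{t∧τ_n} := {A ∈ F : A ∩ {t∧τ_n ≤ s} ∈ F_s for all s ∈ [0,∞)}. -/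
/-!
Write `E = {τₙ ≤ t for all n}`. Every `A ∈ F_t` is the union of the sets `A ∩ {t ≤ τₙ}`, which lie
in `F_{t ∧ τₙ}`, and of `A ∩ E`. Along every path `X_{s ∧ τₙ} → X_s`: before the lifetime `ζ` the
exit times eventually exceed `s`, and after `ζ` the path is constant. As `X_{s ∧ τₙ}` is
`F_{s ∧ τₙ}`-measurable, `X_s` is `⋁ₙ F_{t ∧ τₙ}`-measurable for `s ≤ t`, and on `E` each `X_s`
coincides with `X_{s ∧ t}`, being the limit of the same stopped values. Hence the trace of `F` on
`E` is contained in `⋁ₙ F_{t ∧ τₙ}` as well.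
-/

open MeasureTheory Set Filter
open scoped ENNReal NNReal

noncomputable section

/-- A path in the canonical space `Ω = C̄([0,∞), J)`: a continuous function
`ω : [0,∞) → [l,r]` (valued in `EReal`) starting inside `J = (l,r)` such that there is
`ζ(ω) ∈ (0,∞]` with `ω(t) ∈ J` for `t < ζ(ω)`, and in case `ζ(ω) < ∞` the path is absorbed
at `r` or at `l` from time `ζ(ω)` onwards. -/
def GoodPath (l r : EReal) (ω : ℝ≥0 → EReal) : Prop :=
  Continuous ω ∧ (∀ t : ℝ≥0, l ≤ ω t ∧ ω t ≤ r) ∧ (l < ω 0 ∧ ω 0 < r) ∧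
    ∃ ζ : ℝ≥0∞, 0 < ζ ∧
      (∀ t : ℝ≥0, (t : ℝ≥0∞) < ζ → l < ω t ∧ ω t < r) ∧
      ((∀ t : ℝ≥0, ζ ≤ (t : ℝ≥0∞) → ω t = r) ∨ (∀ t : ℝ≥0, ζ ≤ (t : ℝ≥0∞) → ω t = l))

/-- The canonical space `Ω` of continuous `[l,r]`-valued paths that start in `J = (l,r)` and
stay at an endpoint of `J` after exiting. -/
abbrev Canon (l r : EReal) := {ω : ℝ≥0 → EReal // GoodPath l r ω}

/-- The natural σ-field `σ(X_s : s ∈ [0,u])` generated by the coordinate process up to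
time `u`. -/
def natSigma (l r : EReal) (u : ℝ≥0) : MeasurableSpace (Canon l r) :=
  ⨆ s : {s : ℝ≥0 // s ≤ u}, MeasurableSpace.comap (fun ω => ω.1 s.1)
    (inferInstance : MeasurableSpace EReal)

/-- The right-continuous canonical filtration
`F_t = ⋂_{ε > 0} σ(X_s : s ∈ [0, t+ε])`. -/
def canonFiltration (l r : EReal) (t : ℝ≥0) : MeasurableSpace (Canon l r) :=
  ⨅ ε : {ε : ℝ≥0 // 0 < ε}, natSigma l r (t + ε.1)

/-- The σ-field `F = ⋁_{t ∈ [0,∞)} F_t`. -/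
def canonSigma (l r : EReal) : MeasurableSpace (Canon l r) :=
  ⨆ t : ℝ≥0, canonFiltration l r t

/-- `F_t` for `t ∈ [0,∞]`, with `F_∞ := F`. -/
def canonFiltrationE (l r : EReal) (t : ℝ≥0∞) : MeasurableSpace (Canon l r) :=
  WithTop.recTopCoe (canonSigma l r) (fun s => canonFiltration l r s) t

/-- The hitting time `τ = inf{t ∈ [0,∞) : X_t ∉ (a, c)}` (with `inf ∅ := ∞`). -/
def exitTimeOf (l r : EReal) (a c : EReal) (ω : Canon l r) : ℝ≥0∞ :=
  sInf ((fun s : ℝ≥0 => (s : ℝ≥0∞)) '' {s : ℝ≥0 | ω.1 s ∉ Ioo a c})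

/-- The family of sets `F_τ = {A ∈ F : A ∩ {τ ≤ s} ∈ F_s for all s ∈ [0,∞)}` associated with
a `[0,∞]`-valued random time `τ` on the canonical space.  (For a stopping time `τ` this family
is a σ-field.) -/
def stoppedFamily (l r : EReal) (τ : Canon l r → ℝ≥0∞) : Set (Set (Canon l r)) :=
  {A | MeasurableSet[canonSigma l r] A ∧
       ∀ s : ℝ≥0, MeasurableSet[canonFiltration l r s] (A ∩ {ω | τ ω ≤ (s : ℝ≥0∞)})}

end

open Topology TopologicalSpace

theorem iInf_le_iff_exists_le {X α : Type*} [TopologicalSpace X] [CompactSpace X] [Nonempty X]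
    [CompleteLinearOrder α] [TopologicalSpace α] [OrderTopology α] {g : X → α}
    (hg : Continuous g) {b : α} : ⨅ x, g x ≤ b ↔ ∃ x, g x ≤ b := by
  refine ⟨fun h => ?_, fun ⟨x, hx⟩ => iInf_le_of_le x hx⟩
  obtain ⟨x, hx⟩ := (isCompact_range hg).sInf_mem (range_nonempty g)
  exact ⟨x, hx.trans_le h⟩

theorem le_iSup_iff_exists_le {X α : Type*} [TopologicalSpace X] [CompactSpace X] [Nonempty X]
    [CompleteLinearOrder α] [TopologicalSpace α] [OrderTopology α] {g : X → α}
    (hg : Continuous g) {b : α} : b ≤ ⨆ x, g x ↔ ∃ x, b ≤ g x :=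
  iInf_le_iff_exists_le (α := αᵒᵈ) hg

theorem ENNReal.sInf_coe_image_le_coe_iff {S : Set ℝ≥0} (hS : IsClosed S) {q : ℝ≥0} :
    sInf (((↑) : ℝ≥0 → ℝ≥0∞) '' S) ≤ q ↔ ∃ v ≤ q, v ∈ S := by
  refine ⟨fun h => ?_, fun ⟨v, hvq, hv⟩ =>
    (sInf_le (mem_image_of_mem _ hv)).trans (coe_le_coe.2 hvq)⟩
  rcases S.eq_empty_or_nonempty with rfl | hne
  · simp at h
  refine ⟨sInf S, ?_, hS.csInf_mem hne (OrderBot.bddBelow S)⟩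
  rwa [← coe_le_coe, coe_sInf hne, ← sInf_image]

namespace MeasureTheory

theorem measurableSet_inter_of_eqOn {Ω ι β : Type*} [mβ : MeasurableSpace β]
    {m : MeasurableSpace Ω} {g : ι → Ω → β} {E A : Set Ω} (hE : MeasurableSet[m] E)
    (hg : ∀ i, ∃ h : Ω → β, Measurable[m] h ∧ EqOn (g i) h E)
    (hA : MeasurableSet[⨆ i, mβ.comap (g i)] A) : MeasurableSet[m] (A ∩ E) := by
  have hle : (⨆ i, mβ.comap (g i)).comap ((↑) : E → Ω) ≤ m.comap (↑) := by
    rw [MeasurableSpace.comap_iSup]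
    refine iSup_le fun i => ?_
    obtain ⟨h, hh, hgh⟩ := hg i
    rw [MeasurableSpace.comap_comp,
      show g i ∘ (↑) = h ∘ ((↑) : E → Ω) from funext fun x => hgh x.2, ← MeasurableSpace.comap_comp]
    exact MeasurableSpace.comap_mono hh.comap_le
  rw [inter_comm, ← Subtype.image_preimage_coe]
  exact @MeasurableSet.subtype_image _ m _ _ hE (hle _ ⟨A, hA, rfl⟩)

variable {Ω ι : Type*} {m : MeasurableSpace Ω}

theorem isStoppingTime_const_withTop [Preorder ι] (f : Filtration ι m) (t : WithTop ι) :
    IsStoppingTime f fun _ => t := fun _ => MeasurableSet.const _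

theorem IsStoppingTime.measurableSpace_const_top [Preorder ι] (f : Filtration ι m) :
    (isStoppingTime_const_withTop f ⊤).measurableSpace = ⨆ i, f i := by
  ext s
  simp [IsStoppingTime.measurableSet]

section Localization

variable [LinearOrder ι] [Nonempty ι] [TopologicalSpace ι] [OrderTopology ι]
  [SecondCountableTopology ι] [MeasurableSpace ι] [BorelSpace ι]
  {β : Type*} [TopologicalSpace β] [MetrizableSpace β] [MeasurableSpace β] [BorelSpace β]
  {f : Filtration ι m} {X : ι → Ω → β} {τ : ℕ → Ω → WithTop ι}

theorem measurable_iSup_measurableSpace_min (hX : IsStronglyProgressive f X)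
    (hτ : ∀ n, IsStoppingTime f (τ n))
    (hlim : ∀ (i : ι) ω,
      Tendsto (fun n => stoppedValue X (fun ω => min (i : WithTop ι) (τ n ω)) ω) atTop (𝓝 (X i ω)))
    {t : WithTop ι} {i : ι} (hi : (i : WithTop ι) ≤ t) :
    Measurable[⨆ n, ((isStoppingTime_const_withTop f t).min (hτ n)).measurableSpace] (X i) := by
  let _ : MeasurableSpace Ω :=
    ⨆ n, ((isStoppingTime_const_withTop f t).min (hτ n)).measurableSpace
  refine measurable_of_tendsto_metrizable' atTop (fun n => ?_) (tendsto_pi_nhds.2 (hlim i))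
  refine (measurable_stoppedValue hX ((isStoppingTime_const f i).min (hτ n))).mono ?_ le_rfl
  exact (IsStoppingTime.measurableSpace_mono _ _ fun ω => min_le_min_right _ hi).trans
    (le_iSup (fun n => ((isStoppingTime_const_withTop f t).min (hτ n)).measurableSpace) n)

theorem exists_measurable_eqOn_iInter_le (hX : IsStronglyProgressive f X)
    (hτ : ∀ n, IsStoppingTime f (τ n))
    (hlim : ∀ (i : ι) ω,
      Tendsto (fun n => stoppedValue X (fun ω => min (i : WithTop ι) (τ n ω)) ω) atTop (𝓝 (X i ω)))
    {t : WithTop ι} (i : ι) :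
    ∃ h : Ω → β,
      Measurable[⨆ n, ((isStoppingTime_const_withTop f t).min (hτ n)).measurableSpace] h ∧
        EqOn (X i) h (⋂ n, {ω | τ n ω ≤ t}) := by
  by_cases hi : (i : WithTop ι) ≤ t
  · exact ⟨X i, measurable_iSup_measurableSpace_min hX hτ hlim hi, eqOn_refl _ _⟩
  lift t to ι using ne_top_of_lt (not_le.1 hi)
  refine ⟨X t, measurable_iSup_measurableSpace_min hX hτ hlim le_rfl, fun ω hω => ?_⟩
  refine tendsto_nhds_unique (hlim i ω) ((hlim t ω).congr fun n => ?_)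
  have hτt : τ n ω ≤ t := mem_iInter.1 hω n
  simp only [stoppedValue, min_eq_right hτt, min_eq_right (hτt.trans (not_le.1 hi).le)]

theorem iSup_measurableSpace_min_eq (hX : IsStronglyProgressive f X)
    (hgen : ⨆ i, f i ≤ ⨆ i, MeasurableSpace.comap (X i) ‹_›)
    (hτ : ∀ n, IsStoppingTime f (τ n))
    (hlim : ∀ (i : ι) ω,
      Tendsto (fun n => stoppedValue X (fun ω => min (i : WithTop ι) (τ n ω)) ω) atTop (𝓝 (X i ω)))
    (t : WithTop ι) :
    ⨆ n, ((isStoppingTime_const_withTop f t).min (hτ n)).measurableSpace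
      = (isStoppingTime_const_withTop f t).measurableSpace := by
  set hconst := isStoppingTime_const_withTop f t
  set G := ⨆ n, (hconst.min (hτ n)).measurableSpace
  have hG : ∀ n, (hconst.min (hτ n)).measurableSpace ≤ G :=
    le_iSup fun n => (hconst.min (hτ n)).measurableSpace
  refine le_antisymm
    (iSup_le fun n => (hconst.min (hτ n)).measurableSpace_mono hconst fun _ => min_le_left _ _) ?_
  intro A hA
  set E := ⋂ n, {ω | τ n ω ≤ t}
  have hE : MeasurableSet[G] E := by
    refine MeasurableSet.iInter fun n => hG n _ ?_
    exact (hconst.measurableSet_min_iff (hτ n) _).2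
      ⟨(hτ n).measurableSet_stopping_time_le hconst, (hτ n).measurableSet_le_stopping_time hconst⟩
  have hAE : MeasurableSet[G] (A ∩ E) :=
    measurableSet_inter_of_eqOn hE (exists_measurable_eqOn_iInter_le hX hτ hlim) (hgen _ hA.1)
  have hsplit : A = (⋃ n, A ∩ {ω | t ≤ τ n ω}) ∪ (A ∩ E) := by
    ext ω
    simp only [E, mem_union, mem_iUnion, mem_inter_iff, mem_iInter, mem_ofPred_eq]
    refine ⟨fun hω => ?_, by rintro (⟨-, hω, -⟩ | ⟨hω, -⟩) <;> exact hω⟩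
    by_cases h : ∃ n, t ≤ τ n ω
    · exact Or.inl (h.imp fun n hn => ⟨hω, hn⟩)
    · simp only [not_exists, not_le] at h
      exact Or.inr ⟨hω, fun n => (h n).le⟩
  rw [hsplit]
  exact (MeasurableSet.iUnion fun n => hG n _ (hconst.measurableSet_inter_le (hτ n) A hA)).union
    hAE

end Localization

end MeasureTheory

section CanonicalSpace

variable {l r : EReal}

theorem natSigma_mono {u v : ℝ≥0} (h : u ≤ v) : natSigma l r u ≤ natSigma l r v :=
  iSup_le fun s => le_iSup_of_le ⟨s.1, s.2.trans h⟩ le_rfl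

theorem natSigma_le_canonFiltration (u : ℝ≥0) : natSigma l r u ≤ canonFiltration l r u :=
  le_iInf fun _ => natSigma_mono le_self_add

theorem canonFiltration_mono : Monotone (canonFiltration l r) := fun u v h =>
  le_iInf fun ε => iInf_le_of_le ⟨v - u + ε, add_pos_of_nonneg_of_pos zero_le ε.2⟩
    (natSigma_mono (by rw [← add_assoc, add_tsub_cancel_of_le h]))

noncomputable def MeasureTheory.Filtration.canon (l r : EReal) :
    Filtration ℝ≥0 (canonSigma l r) where
  seq := canonFiltration l r
  mono' := canonFiltration_mono
  le' := le_iSup (canonFiltration l r)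

theorem measurableSpace_const_canon (t : ℝ≥0∞) :
    (isStoppingTime_const_withTop (Filtration.canon l r) t).measurableSpace
      = canonFiltrationE l r t := by
  induction t using ENNReal.recTopCoe with
  | top => exact IsStoppingTime.measurableSpace_const_top _
  | coe t => exact IsStoppingTime.measurableSpace_const _ t

theorem generateFrom_stoppedFamily {τ : Canon l r → ℝ≥0∞}
    (hτ : IsStoppingTime (Filtration.canon l r) τ) :
    MeasurableSpace.generateFrom (stoppedFamily l r τ) = hτ.measurableSpace :=
  @MeasurableSpace.generateFrom_measurableSet _ hτ.measurableSpace

def coordProcess (l r : EReal) (s : ℝ≥0) (ω : Canon l r) : EReal := ω.1 s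

theorem measurable_coordProcess {u v : ℝ≥0} (h : v ≤ u) :
    Measurable[natSigma l r u] (coordProcess l r v) :=
  measurable_iff_comap_le.2 (le_iSup_of_le ⟨v, h⟩ le_rfl)

theorem isStronglyProgressive_coordProcess :
    IsStronglyProgressive (Filtration.canon l r) (coordProcess l r) :=
  StronglyAdapted.isStronglyProgressive_of_continuous
    (fun s => ((measurable_coordProcess le_rfl).mono (natSigma_le_canonFiltration s)
      le_rfl).stronglyMeasurable) fun ω => ω.2.1

theorem canonSigma_le_iSup_comap_coordProcess :
    canonSigma l r ≤ ⨆ s, MeasurableSpace.comap (coordProcess l r s) inferInstance :=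
  iSup_le fun _ => (iInf_le _ ⟨1, one_pos⟩).trans (iSup_le fun v => le_iSup_of_le v.1 le_rfl)

end CanonicalSpace

section ExitTime

variable {l r a c : EReal}

theorem exitTimeOf_le_coe_iff {ω : Canon l r} {q : ℝ≥0} :
    exitTimeOf l r a c ω ≤ q ↔ ∃ v ≤ q, ω.1 v ∉ Ioo a c :=
  ENNReal.sInf_coe_image_le_coe_iff (isOpen_Ioo.isClosed_compl.preimage ω.2.1)

theorem measurableSet_exitTimeOf_le (q : ℝ≥0) :
    MeasurableSet[natSigma l r q] {ω | exitTimeOf l r a c ω ≤ q} := by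
  -- `τ ≤ q` is read off the path's extrema on `[0, q]`, which equal those on a countable dense set
  have : CompactSpace (Icc 0 q) := isCompact_iff_compactSpace.1 isCompact_Icc
  have : Nonempty (Icc 0 q) := ⟨⟨0, le_rfl, zero_le⟩⟩
  obtain ⟨D, hDc, hD⟩ := TopologicalSpace.exists_countable_dense (Icc 0 q)
  have : Countable D := hDc.to_subtype
  have hset : {ω | exitTimeOf l r a c ω ≤ q}
      = {ω : Canon l r | ⨅ v : D, ω.1 v ≤ a} ∪ {ω | c ≤ ⨆ v : D, ω.1 v} := by
    ext ω
    have hcont : Continuous fun v : Icc 0 q => ω.1 v := ω.2.1.comp continuous_subtype_val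
    simp only [mem_ofPred_eq, mem_union, hD.ciInf' hcont, hD.ciSup' hcont,
      iInf_le_iff_exists_le hcont, le_iSup_iff_exists_le hcont, exitTimeOf_le_coe_iff, mem_Ioo,
      not_and_or, not_lt]
    constructor
    · rintro ⟨v, hv, h | h⟩
      exacts [Or.inl ⟨⟨v, zero_le, hv⟩, h⟩, Or.inr ⟨⟨v, zero_le, hv⟩, h⟩]
    · rintro (⟨v, h⟩ | ⟨v, h⟩)
      exacts [⟨v, v.2.2, Or.inl h⟩, ⟨v, v.2.2, Or.inr h⟩]
  rw [hset]
  have hmeas (v : D) : Measurable[natSigma l r q] fun ω : Canon l r => ω.1 v :=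
    measurable_coordProcess v.1.2.2
  exact (measurableSet_le (Measurable.iInf hmeas) measurable_const).union
    (measurableSet_le measurable_const (Measurable.iSup hmeas))

theorem isStoppingTime_exitTimeOf :
    IsStoppingTime (Filtration.canon l r) (exitTimeOf l r a c) := fun q =>
  natSigma_le_canonFiltration q _ (measurableSet_exitTimeOf_le q)

end ExitTime

section Exhaustion

variable {l r : EReal} {a c : ℕ → EReal}

theorem eventually_coe_lt_exitTimeOf (hal : Tendsto a atTop (𝓝 l))
    (hcr : Tendsto c atTop (𝓝 r)) {ω : Canon l r} {q : ℝ≥0} (hq : ∀ v ≤ q, ω.1 v ∈ Ioo l r) :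
    ∀ᶠ n in atTop, (q : ℝ≥0∞) < exitTimeOf l r (a n) (c n) ω := by
  have hne : (Icc 0 q).Nonempty := ⟨0, le_rfl, zero_le⟩
  obtain ⟨v₁, hv₁, hmin⟩ := isCompact_Icc.exists_isMinOn hne ω.2.1.continuousOn
  obtain ⟨v₂, hv₂, hmax⟩ := isCompact_Icc.exists_isMaxOn hne ω.2.1.continuousOn
  filter_upwards [hal.eventually (gt_mem_nhds (hq v₁ hv₁.2).1),
    hcr.eventually (lt_mem_nhds (hq v₂ hv₂.2).2)] with n han hcn
  rw [← not_le, exitTimeOf_le_coe_iff]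
  rintro ⟨v, hv, hnot⟩
  exact hnot ⟨han.trans_le (hmin ⟨zero_le, hv⟩), (hmax ⟨zero_le, hv⟩).trans_lt hcn⟩

theorem tendsto_stoppedValue_coordProcess (hal : Tendsto a atTop (𝓝 l))
    (hcr : Tendsto c atTop (𝓝 r)) (s : ℝ≥0) (ω : Canon l r) :
    Tendsto (fun n => stoppedValue (coordProcess l r)
      (fun ω' => min (s : WithTop ℝ≥0) (exitTimeOf l r (a n) (c n) ω')) ω) atTop
      (𝓝 (coordProcess l r s ω)) := by
  obtain ⟨ζ, -, hζin, hζabs⟩ := ω.2.2.2.2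
  obtain ⟨m, hms, hmζ, hconst⟩ : ∃ m : ℝ≥0, m ≤ s ∧ (m : ℝ≥0∞) ≤ ζ ∧
      ∀ w, m ≤ w → w ≤ s → ω.1 w = ω.1 m := by
    rcases le_total (s : ℝ≥0∞) ζ with hsζ | hζs
    · exact ⟨s, le_rfl, hsζ, fun w h1 h2 => by rw [le_antisymm h2 h1]⟩
    · lift ζ to ℝ≥0 using ne_top_of_le_ne_top ENNReal.coe_ne_top hζs
      refine ⟨ζ, ENNReal.coe_le_coe.1 hζs, le_rfl, fun w hw _ => ?_⟩
      rcases hζabs with h | h <;> rw [h w (ENNReal.coe_le_coe.2 hw), h ζ le_rfl]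
  set w : ℕ → ℝ≥0 := fun n =>
    WithTop.untopA (min (s : WithTop ℝ≥0) (exitTimeOf l r (a n) (c n) ω))
  have hmin_ne_top n : min (s : WithTop ℝ≥0) (exitTimeOf l r (a n) (c n) ω) ≠ ⊤ :=
    ne_top_of_le_ne_top WithTop.coe_ne_top (min_le_left _ _)
  have hws n : w n ≤ s := WithTop.untopA_le (min_le_left _ _)
  have hwm : Tendsto (fun n => min (w n) m) atTop (𝓝 m) := by
    refine tendsto_order.2
      ⟨fun u hu => ?_, fun u hu => .of_forall fun n => (min_le_right _ _).trans_lt hu⟩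
    have hu' : (u : ℝ≥0∞) < ζ := (ENNReal.coe_lt_coe.2 hu).trans_le hmζ
    filter_upwards [eventually_coe_lt_exitTimeOf hal hcr fun v hv =>
      hζin v ((ENNReal.coe_le_coe.2 hv).trans_lt hu')] with n hn
    refine lt_min ((WithTop.lt_untopA_iff (hmin_ne_top n)).2 (lt_min ?_ hn)) hu
    exact WithTop.coe_lt_coe.2 (hu.trans_le hms)
  have hwω n : ω.1 (w n) = ω.1 (min (w n) m) := by
    rcases le_total (w n) m with h | h
    · rw [min_eq_left h]
    · rw [min_eq_right h, hconst _ h (hws n)]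
  rw [coordProcess, hconst s hms le_rfl]
  exact ((ω.2.1.tendsto m).comp hwm).congr fun n => (hwω n).symm

end Exhaustion

theorem iSup_stopped_sigma_eq_canonFiltration_general
    (l r : EReal)
    (a c : ℕ → EReal)
    (hal : Tendsto a atTop (nhds l)) (hcr : Tendsto c atTop (nhds r))
    (t : ℝ≥0∞) :
    (⨆ n : ℕ, MeasurableSpace.generateFrom
        (stoppedFamily l r (fun ω => min t (exitTimeOf l r (a n) (c n) ω))))
      = canonFiltrationE l r t := by
  have hτ : ∀ n, IsStoppingTime (Filtration.canon l r) (exitTimeOf l r (a n) (c n)) :=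
    fun n => isStoppingTime_exitTimeOf
  have hconst := isStoppingTime_const_withTop (Filtration.canon l r) t
  calc (⨆ n, MeasurableSpace.generateFrom
          (stoppedFamily l r fun ω => min t (exitTimeOf l r (a n) (c n) ω)))
      _ = ⨆ n, (hconst.min (hτ n)).measurableSpace :=
        iSup_congr fun n => generateFrom_stoppedFamily (hconst.min (hτ n))
      _ = hconst.measurableSpace :=
        iSup_measurableSpace_min_eq isStronglyProgressive_coordProcess
          canonSigma_le_iSup_comap_coordProcess hτ
          (fun s ω => tendsto_stoppedValue_coordProcess hal hcr s ω) t
      _ = canonFiltrationE l r t := measurableSpace_const_canon t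

/-- **Lemma: `⋁_{n ∈ ℕ} F_{t ∧ τ_n} = F_t` for every `t ∈ [0,∞]`** on the canonical space of
possibly exiting continuous paths.  Here `(a_n)` and `(c_n)` are strictly monotone sequences
in `J = (l, r)` with `a_n ↓ l`, `c_n ↑ r`, `a_n < c_n`, the stopping times are
`τ_n = inf{s : X_s ∉ (a_n, c_n)}` (`inf ∅ := ∞`), `F_{t ∧ τ_n}` is the σ-field
`{A ∈ F : A ∩ {t ∧ τ_n ≤ s} ∈ F_s ∀ s ∈ [0,∞)}` (realised as the σ-field generated by this
family of sets, which is already a σ-field since `t ∧ τ_n` is a stopping time) and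
`F_∞ := F`. -/
theorem iSup_stopped_sigma_eq_canonFiltration
    (l r : EReal) (hlr : l < r)
    (a c : ℕ → EReal)
    (ha : StrictAnti a) (hc : StrictMono c)
    (haJ : ∀ n, l < a n) (hcJ : ∀ n, c n < r) (hac : ∀ n, a n < c n)
    (hal : Tendsto a atTop (nhds l)) (hcr : Tendsto c atTop (nhds r))
    (t : ℝ≥0∞) :
    (⨆ n : ℕ, MeasurableSpace.generateFrom
        (stoppedFamily l r (fun ω => min t (exitTimeOf l r (a n) (c n) ω))))
      = canonFiltrationE l r t :=
  iSup_stopped_sigma_eq_canonFiltration_general l r a c hal hcr t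
end

section
/- For α > −1 one has ṽ(∞) := lim_{x→∞} ṽ(x) < ∞ if and only if α > 1. (In the diffusion interpretation: the auxiliary diffusion dỸ_t = (|Ỹ_t|^α + Ỹ_t) dt + dW̃_t exits its state space ℝ at +∞ if and only if α > 1.) -/
/-!
With `ρ_y(t) = exp (-∫_y^t 2b)` the integrand of `ṽ` is `(s̃(x) - s̃(y)) / ρ̃(y) = ∫_y^x ρ_y`,
the scale function re-based at `y`. For the drift `b(u) = |u|^α + u`: if `α > 1`, then `b ≥ y^α`
on `[y, ∞)`, so `∫_y^x ρ_y ≤ 1 / (2 y^α)`, which is integrable at `∞`, and the increasing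
function `ṽ` stays bounded. If `α ≤ 1`, then `b(u) ≤ 2u` for `u ≥ 1`, so `ρ_y ≥ e^{-8}` on
`[y, y + 1/y]`, hence `∫_y^x ρ_y ≥ e^{-8} / y` and `ṽ(x)` grows like `log x`.
-/

open MeasureTheory Set Filter intervalIntegral Topology

lemma MonotoneOn.exists_tendsto_atTop_of_bddAbove {α β : Type*} [LinearOrder α]
    [ConditionallyCompleteLinearOrder β] [TopologicalSpace β] [OrderTopology β] {f : α → β}
    {a : α} (hf : MonotoneOn f (Ici a)) (hbdd : BddAbove (f '' Ici a)) :
    ∃ L, Tendsto f atTop (𝓝 L) := by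
  have hmono : Monotone fun x => f (max x a) := fun x y hxy =>
    hf (le_max_right x a) (le_max_right y a) (max_le_max hxy le_rfl)
  have hbdd' : BddAbove (range fun x => f (max x a)) :=
    hbdd.mono (range_subset_iff.2 fun x => mem_image_of_mem f (le_max_right x a))
  refine ⟨_, (tendsto_atTop_ciSup hmono hbdd').congr' ?_⟩
  filter_upwards [eventually_ge_atTop a] with x hx
  rw [max_eq_left hx]

lemma MeasureTheory.LocallyIntegrable.intervalIntegrable {f : ℝ → ℝ} (hf : LocallyIntegrable f)
    (a b : ℝ) : IntervalIntegrable f volume a b :=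
  (hf.integrableOn_isCompact isCompact_uIcc).intervalIntegrable

lemma locallyIntegrable_abs_rpow {α : ℝ} (hα : -1 < α) : LocallyIntegrable fun x : ℝ => |x| ^ α :=
  locallyIntegrable_of_norm_le_rpow (by simp) (α := -α) (C := 1)
    (by rw [Module.finrank_self]; push_cast; linarith)
    (ae_of_all _ fun x => by simp [abs_of_nonneg (Real.rpow_nonneg (abs_nonneg x) α)])
    (continuous_abs.measurable.pow_const α).aestronglyMeasurable

lemma integral_exp_neg_mul_sub {k : ℝ} (hk : k ≠ 0) (y x : ℝ) :
    ∫ t in y..x, Real.exp (-(k * (t - y))) = (1 - Real.exp (-(k * (x - y)))) / k := by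
  have hderiv (t : ℝ) : HasDerivAt (fun t => -Real.exp (-(k * (t - y))) / k)
      (Real.exp (-(k * (t - y)))) t := by
    have h := ((((hasDerivAt_id t).sub_const y).const_mul k).fun_neg.exp.fun_neg.div_const k)
    refine h.congr_deriv ?_
    field_simp
    rfl
  rw [integral_eq_sub_of_hasDerivAt (fun t _ => hderiv t)
    (by apply Continuous.intervalIntegrable; fun_prop)]
  simp only [sub_self, mul_zero, neg_zero, Real.exp_zero]
  ring

/-- The scale density `ρ`, scale function `s` and Feller test function `v` of `dY = b(Y) dt + dW`,
normalised at `c`. -/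
noncomputable def scaleDensity (b : ℝ → ℝ) (c x : ℝ) : ℝ := Real.exp (-(∫ y in c..x, 2 * b y))

noncomputable def scaleFunction (b : ℝ → ℝ) (c x : ℝ) : ℝ := ∫ y in c..x, scaleDensity b c y

noncomputable def fellerFunction (b : ℝ → ℝ) (c x : ℝ) : ℝ :=
  ∫ y in c..x, (scaleFunction b c x - scaleFunction b c y) / scaleDensity b c y

section ScaleFunction

variable {b : ℝ → ℝ} {c x y : ℝ}

lemma scaleDensity_pos : 0 < scaleDensity b c x := Real.exp_pos _

lemma scaleFunction_nonneg (h : y ≤ x) : 0 ≤ scaleFunction b y x :=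
  integral_nonneg h fun _ _ => scaleDensity_pos.le

variable (hb : LocallyIntegrable b)
include hb

lemma scaleDensity_eq_mul (c y x : ℝ) :
    scaleDensity b c x = scaleDensity b c y * scaleDensity b y x := by
  have h2b a a' := (hb.intervalIntegrable a a').const_mul 2
  rw [scaleDensity, scaleDensity, scaleDensity, ← Real.exp_add,
    ← integral_add_adjacent_intervals (h2b c y) (h2b y x), neg_add]

lemma continuous_scaleDensity (c : ℝ) : Continuous (scaleDensity b c) :=
  Real.continuous_exp.comp
    (continuous_primitive (fun a a' => (hb.intervalIntegrable a a').const_mul 2) c).neg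

lemma continuous_scaleFunction (c : ℝ) : Continuous (scaleFunction b c) :=
  continuous_primitive (fun _ _ => (continuous_scaleDensity hb c).intervalIntegrable _ _) c

lemma monotone_scaleFunction (c : ℝ) : Monotone (scaleFunction b c) := fun x x' hxx' => by
  rw [← sub_nonneg, scaleFunction, scaleFunction,
    integral_interval_sub_left ((continuous_scaleDensity hb c).intervalIntegrable _ _)
      ((continuous_scaleDensity hb c).intervalIntegrable _ _)]
  exact integral_nonneg hxx' fun _ _ => scaleDensity_pos.le

lemma scaleFunction_sub_div_scaleDensity (c y x : ℝ) :
    (scaleFunction b c x - scaleFunction b c y) / scaleDensity b c y = scaleFunction b y x := by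
  rw [scaleFunction, scaleFunction,
    integral_interval_sub_left ((continuous_scaleDensity hb c).intervalIntegrable _ _)
      ((continuous_scaleDensity hb c).intervalIntegrable _ _), ← intervalIntegral.integral_div,
    scaleFunction]
  refine integral_congr fun t _ => ?_
  rw [scaleDensity_eq_mul hb c y t, mul_div_cancel_left₀ _ scaleDensity_pos.ne']

lemma continuous_scaleFunction_left (x : ℝ) : Continuous fun y => scaleFunction b y x := by
  refine (((continuous_const (y := scaleFunction b 0 x)).sub (continuous_scaleFunction hb 0)).div
    (continuous_scaleDensity hb 0) fun _ => scaleDensity_pos.ne').congr fun y => ?_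
  exact scaleFunction_sub_div_scaleDensity hb 0 y x

lemma fellerFunction_eq_integral (c x : ℝ) :
    fellerFunction b c x = ∫ y in c..x, scaleFunction b y x :=
  integral_congr fun y _ => scaleFunction_sub_div_scaleDensity hb c y x

lemma integral_scaleFunction_le_fellerFunction {a a' : ℝ} (hca : c ≤ a) (haa' : a ≤ a')
    (ha'x : a' ≤ x) : ∫ y in a..a', scaleFunction b y x ≤ fellerFunction b c x := by
  rw [fellerFunction_eq_integral hb]
  refine integral_mono_interval hca haa' ha'x ?_
    ((continuous_scaleFunction_left hb x).intervalIntegrable _ _)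
  filter_upwards [ae_restrict_mem measurableSet_Ioc] with y hy using scaleFunction_nonneg hy.2

lemma monotoneOn_fellerFunction (c : ℝ) : MonotoneOn (fellerFunction b c) (Ici c) := by
  intro x hx x' _ hxx'
  calc fellerFunction b c x = ∫ y in c..x, scaleFunction b y x := fellerFunction_eq_integral hb c x
    _ ≤ ∫ y in c..x, scaleFunction b y x' :=
        integral_mono_on hx ((continuous_scaleFunction_left hb x).intervalIntegrable _ _)
          ((continuous_scaleFunction_left hb x').intervalIntegrable _ _)
          fun y _ => monotone_scaleFunction hb y hxx'
    _ ≤ fellerFunction b c x' := integral_scaleFunction_le_fellerFunction hb le_rfl hx hxx'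

lemma scaleFunction_le_inv {k : ℝ} (hk : 0 < k) (hbk : ∀ u ∈ Icc y x, k ≤ b u) :
    scaleFunction b y x ≤ (2 * k)⁻¹ := by
  rcases le_total x y with hxy | hyx
  · calc scaleFunction b y x ≤ scaleFunction b y y := monotone_scaleFunction hb y hxy
      _ = 0 := integral_same
      _ ≤ (2 * k)⁻¹ := by positivity
  have hdecay : ∀ t ∈ Icc y x, scaleDensity b y t ≤ Real.exp (-(2 * k * (t - y))) := by
    intro t ht
    refine Real.exp_le_exp.2 (neg_le_neg ?_)
    calc 2 * k * (t - y) = ∫ _ in y..t, 2 * k := by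
          rw [intervalIntegral.integral_const, smul_eq_mul]; ring
      _ ≤ ∫ u in y..t, 2 * b u :=
          integral_mono_on ht.1 intervalIntegrable_const
            ((hb.intervalIntegrable y t).const_mul 2)
            fun u hu => by linarith [hbk u ⟨hu.1, hu.2.trans ht.2⟩]
  calc scaleFunction b y x ≤ ∫ t in y..x, Real.exp (-(2 * k * (t - y))) :=
        integral_mono_on hyx ((continuous_scaleDensity hb y).intervalIntegrable _ _)
          (by apply Continuous.intervalIntegrable; fun_prop) hdecay
    _ = (1 - Real.exp (-(2 * k * (x - y)))) / (2 * k) :=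
        integral_exp_neg_mul_sub (by positivity) y x
    _ ≤ (2 * k)⁻¹ := by
        rw [div_eq_mul_inv]
        exact mul_le_of_le_one_left (by positivity)
          (by linarith [Real.exp_pos (-(2 * k * (x - y)))])

lemma mul_exp_le_scaleFunction {h M : ℝ} (hh : 0 ≤ h) (hx : y + h ≤ x)
    (hM : ∀ t ∈ Icc y (y + h), ∫ u in y..t, 2 * b u ≤ M) :
    h * Real.exp (-M) ≤ scaleFunction b y x :=
  calc h * Real.exp (-M) = ∫ _ in y..y + h, Real.exp (-M) := by simp
    _ ≤ scaleFunction b y (y + h) :=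
        integral_mono_on (by linarith) intervalIntegrable_const
          ((continuous_scaleDensity hb y).intervalIntegrable _ _)
          fun t ht => Real.exp_le_exp.2 (neg_le_neg (hM t ht))
    _ ≤ scaleFunction b y x := monotone_scaleFunction hb y hx

lemma inv_mul_exp_le_scaleFunction {K : ℝ} (hK0 : 0 ≤ K) (hK : ∀ u, 1 ≤ u → b u ≤ K * u)
    (hy : 1 ≤ y) (hx : y + y⁻¹ ≤ x) : y⁻¹ * Real.exp (-(4 * K)) ≤ scaleFunction b y x := by
  have hy0 : 0 < y := one_pos.trans_le hy
  have hyinv : y⁻¹ ≤ y := (inv_le_one_of_one_le₀ hy).trans hy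
  refine mul_exp_le_scaleFunction hb (by positivity) hx fun t ht => ?_
  calc ∫ u in y..t, 2 * b u ≤ ∫ _ in y..t, 4 * K * y :=
        integral_mono_on ht.1 ((hb.intervalIntegrable y t).const_mul 2) intervalIntegrable_const
          fun u hu => by
            have hKu : K * u ≤ K * (y + y⁻¹) := by gcongr; linarith [hu.2, ht.2]
            nlinarith [hK u (hy.trans hu.1), mul_le_mul_of_nonneg_left hyinv hK0]
    _ = (t - y) * (4 * K * y) := by rw [intervalIntegral.integral_const, smul_eq_mul]
    _ ≤ y⁻¹ * (4 * K * y) := by gcongr; linarith [ht.2]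
    _ = 4 * K := by field_simp

lemma tendsto_fellerFunction_atTop {K : ℝ} (hK0 : 0 ≤ K) (hK : ∀ u, 1 ≤ u → b u ≤ K * u)
    (c : ℝ) : Tendsto (fellerFunction b c) atTop atTop := by
  set m := max c 1
  have hm : 0 < m := lt_max_of_lt_right one_pos
  have hlog : ∀ x, m + 1 ≤ x →
      Real.exp (-(4 * K)) * Real.log ((x - 1) / m) ≤ fellerFunction b c x := by
    intro x hx
    have hmx : m ≤ x - 1 := by linarith
    have hpos : ∀ y ∈ uIcc m (x - 1), y ≠ 0 := fun y hy =>
      (hm.trans_le (uIcc_of_le hmx ▸ hy).1).ne'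
    calc Real.exp (-(4 * K)) * Real.log ((x - 1) / m)
        = ∫ y in m..x - 1, y⁻¹ * Real.exp (-(4 * K)) := by
          rw [intervalIntegral.integral_mul_const, integral_inv fun h => hpos 0 h rfl, mul_comm]
      _ ≤ ∫ y in m..x - 1, scaleFunction b y x :=
          integral_mono_on hmx
            ((intervalIntegrable_inv hpos continuousOn_id).mul_const _)
            ((continuous_scaleFunction_left hb x).intervalIntegrable _ _)
            fun y hy => inv_mul_exp_le_scaleFunction hb hK0 hK ((le_max_right c 1).trans hy.1)
              (by linarith [hy.2, inv_le_one_of_one_le₀ ((le_max_right c 1).trans hy.1)])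
      _ ≤ fellerFunction b c x :=
          integral_scaleFunction_le_fellerFunction hb (le_max_left c 1) hmx (by linarith)
  refine tendsto_atTop_mono' atTop (eventually_atTop.2 ⟨m + 1, hlog⟩) ?_
  exact (Real.tendsto_log_atTop.comp ((tendsto_atTop_add_const_right atTop (-1)
    tendsto_id).atTop_div_const hm)).const_mul_atTop (Real.exp_pos _)

end ScaleFunction

section Convergence

variable {b f : ℝ → ℝ} {m : ℝ} (hb : LocallyIntegrable b) (hf_pos : ∀ u, m ≤ u → 0 < f u)
  (hf_mono : MonotoneOn f (Ici m)) (hfb : ∀ u, m ≤ u → f u ≤ b u)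
include hb hf_pos hf_mono hfb

lemma scaleFunction_le_inv_of_le_drift {y : ℝ} (hy : m ≤ y) (x : ℝ) :
    scaleFunction b y x ≤ (2 * f y)⁻¹ :=
  scaleFunction_le_inv hb (hf_pos y hy) fun u hu =>
    (hf_mono hy (hy.trans hu.1) hu.1).trans (hfb u (hy.trans hu.1))

variable (hf_int : IntegrableOn (fun u => (f u)⁻¹) (Ioi m))
include hf_int

lemma integral_scaleFunction_le_integral_Ioi {a x : ℝ} (hma : m ≤ a) (hax : a ≤ x) :
    ∫ y in a..x, scaleFunction b y x ≤ ∫ y in Ioi m, (2 * f y)⁻¹ := by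
  have hint : IntegrableOn (fun y => (2 * f y)⁻¹) (Ioi m) := by
    simp only [mul_inv]
    exact hf_int.const_mul 2⁻¹
  calc ∫ y in a..x, scaleFunction b y x ≤ ∫ y in a..x, (2 * f y)⁻¹ :=
        integral_mono_on hax ((continuous_scaleFunction_left hb x).intervalIntegrable _ _)
          ((intervalIntegrable_iff_integrableOn_Ioc_of_le hax).2
            (hint.mono_set (Ioc_subset_Ioi_self.trans (Ioi_subset_Ioi hma))))
          fun y hy => scaleFunction_le_inv_of_le_drift hb hf_pos hf_mono hfb (hma.trans hy.1) x
    _ ≤ ∫ y in Ioi m, (2 * f y)⁻¹ := by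
        rw [integral_of_le hax]
        refine setIntegral_mono_set hint ?_
          (Ioc_subset_Ioi_self.trans (Ioi_subset_Ioi hma)).eventuallyLE
        filter_upwards [ae_restrict_mem measurableSet_Ioi] with y hy
        exact (inv_pos.2 (mul_pos two_pos (hf_pos y (le_of_lt hy)))).le

lemma bddAbove_fellerFunction (c : ℝ) : BddAbove (fellerFunction b c '' Ici c) := by
  set m' := max c m
  set S := scaleFunction b c m' + scaleDensity b c m' * (2 * f m')⁻¹
  have hS : ∀ x, scaleFunction b c x ≤ S := fun x => by
    have h := scaleFunction_le_inv_of_le_drift hb hf_pos hf_mono hfb (le_max_right c m) x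
    rw [← scaleFunction_sub_div_scaleDensity hb c, div_le_iff₀ scaleDensity_pos] at h
    linarith
  refine ⟨(∫ y in c..m', (S - scaleFunction b c y) / scaleDensity b c y) +
    ∫ y in Ioi m, (2 * f y)⁻¹, ?_⟩
  rintro _ ⟨x, hx, rfl⟩
  set x' := max x m'
  have hcx' : c ≤ x' := (le_max_left c m).trans (le_max_right x m')
  calc fellerFunction b c x ≤ fellerFunction b c x' :=
        monotoneOn_fellerFunction hb c hx hcx' (le_max_left x m')
    _ = (∫ y in c..m', scaleFunction b y x') + ∫ y in m'..x', scaleFunction b y x' := by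
        rw [fellerFunction_eq_integral hb, integral_add_adjacent_intervals
          ((continuous_scaleFunction_left hb x').intervalIntegrable _ _)
          ((continuous_scaleFunction_left hb x').intervalIntegrable _ _)]
    _ ≤ _ := by
        gcongr ?_ + ?_
        · refine integral_mono_on (le_max_left c m)
            ((continuous_scaleFunction_left hb x').intervalIntegrable _ _) ?_ fun y _ => ?_
          · exact ((continuous_const.sub (continuous_scaleFunction hb c)).div
              (continuous_scaleDensity hb c) fun _ => scaleDensity_pos.ne').intervalIntegrable _ _
          · rw [← scaleFunction_sub_div_scaleDensity hb c]
            exact div_le_div_of_nonneg_right (sub_le_sub_right (hS x') _) scaleDensity_pos.le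
        · exact integral_scaleFunction_le_integral_Ioi hb hf_pos hf_mono hfb hf_int
            (le_max_right c m) (le_max_right x m')

lemma exists_tendsto_fellerFunction (c : ℝ) : ∃ L, Tendsto (fellerFunction b c) atTop (𝓝 L) :=
  (monotoneOn_fellerFunction hb c).exists_tendsto_atTop_of_bddAbove
    (bddAbove_fellerFunction hb hf_pos hf_mono hfb hf_int c)

end Convergence

section PowerDrift

variable {α : ℝ}

lemma locallyIntegrable_abs_rpow_add (hα : -1 < α) :
    LocallyIntegrable fun x : ℝ => |x| ^ α + x :=
  (locallyIntegrable_abs_rpow hα).add continuous_id.locallyIntegrable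

lemma abs_rpow_add_le_two_mul (hα : α ≤ 1) {u : ℝ} (hu : 1 ≤ u) : |u| ^ α + u ≤ 2 * u := by
  have : u ^ α ≤ u := by simpa using Real.rpow_le_rpow_of_exponent_le hu hα
  rw [abs_of_nonneg (zero_le_one.trans hu)]
  linarith

lemma rpow_le_abs_rpow_add {u : ℝ} (hu : 0 ≤ u) : u ^ α ≤ |u| ^ α + u := by
  rw [abs_of_nonneg hu]
  linarith

lemma integrableOn_inv_rpow_Ioi (hα : 1 < α) : IntegrableOn (fun u : ℝ => (u ^ α)⁻¹) (Ioi 1) :=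
  (integrableOn_Ioi_rpow_of_lt (by linarith : -α < -1) one_pos).congr_fun
    (fun u hu => Real.rpow_neg (zero_le_one.trans (le_of_lt hu)) α) measurableSet_Ioi

end PowerDrift

/-- **Example (SDE `dY = |Y|^α dt + dW`): the auxiliary diffusion
`dỸ = (|Ỹ|^α + Ỹ) dt + dW̃` exits at `+∞` iff `α > 1`.**  For `α > -1` and `c ∈ ℝ`, with
`ρ̃(x) = exp(-∫_c^x 2(|y|^α + y) dy)`, `s̃(x) = ∫_c^x ρ̃(y) dy` and
`ṽ(x) = ∫_c^x (s̃(x) - s̃(y))/ρ̃(y) dy`, one has `ṽ(∞) = lim_{x → ∞} ṽ(x) < ∞`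
(equivalently, since `ṽ` is increasing on `(c, ∞)`, `ṽ` converges to a finite limit at `+∞`)
if and only if `α > 1`. -/
theorem example_power_drift_aux_exits_at_top_iff
    (α : ℝ) (hα : -1 < α) (c : ℝ)
    (ρt st vt : ℝ → ℝ)
    (hρt : ∀ x : ℝ, ρt x = Real.exp (-(∫ y in c..x, 2 * (|y| ^ α + y))))
    (hst : ∀ x : ℝ, st x = ∫ y in c..x, ρt y)
    (hvt : ∀ x : ℝ, vt x = ∫ y in c..x, (st x - st y) / ρt y) :
    (∃ L : ℝ, Tendsto vt atTop (nhds L)) ↔ 1 < α := by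
  obtain rfl : ρt = scaleDensity (fun y => |y| ^ α + y) c := funext hρt
  obtain rfl : st = scaleFunction (fun y => |y| ^ α + y) c := funext hst
  obtain rfl : vt = fellerFunction (fun y => |y| ^ α + y) c := funext hvt
  have hb := locallyIntegrable_abs_rpow_add hα
  constructor
  · rintro ⟨L, hL⟩
    by_contra! hα1
    exact not_tendsto_nhds_of_tendsto_atTop
      (tendsto_fellerFunction_atTop hb zero_le_two (fun u => abs_rpow_add_le_two_mul hα1) c) L hL
  · intro hα1
    exact exists_tendsto_fellerFunction hb (f := fun u => u ^ α) (m := 1)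
      (fun u hu => Real.rpow_pos_of_pos (one_pos.trans_le hu) α)
      (fun u hu v _ huv => Real.rpow_le_rpow (zero_le_one.trans hu) huv (by linarith))
      (fun u hu => rpow_le_abs_rpow_add (zero_le_one.trans hu))
      (integrableOn_inv_rpow_Ioi hα1) c
end
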